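/- arXiv:1902.03843 — 2 statements merged into one kernel-verified Lean document; each statement's English description precedes it below -/
import Mathlib

section
/- Let L = (T_1,…,T_ℓ,S) be a tuple as in the setting satisfying conditions (H), (H'), (S), (G), and condition (T1) with its final clause (tail-root clause) omitted. Then conditions (A2) and (A2') hold for all consecutive pairs of L if and only if both condition (T2) and the tail-root clause of (T1) hold. -/
namespace OrthoBij

/-- `lev s i = #i(s) - #(-i)(s)` as an integer. -/
def lev (s : List ℤ) (i : ℤ) : ℤ := (s.count i : ℤ) - (s.count (-i) : ℤ)

/-- A vacillating tableau of dimension `k`: a word with letters in `{-k,…,k}` such that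
every prefix satisfies the three conditions. -/
def IsVacillating (k : ℕ) (w : List ℤ) : Prop :=
  (∀ a ∈ w, -(k : ℤ) ≤ a ∧ a ≤ (k : ℤ)) ∧
  ∀ s : List ℤ, s <+: w →
    (∀ i : ℤ, 1 ≤ i → i ≤ (k : ℤ) → 0 ≤ lev s i) ∧
    (∀ i : ℤ, 1 ≤ i → i + 1 ≤ (k : ℤ) → lev s (i + 1) ≤ lev s i) ∧
    (s.getLast? = some 0 → 0 < lev s (k : ℤ))

/-- The shape of the vacillating tableau is the empty partition. -/
def EmptyShape (k : ℕ) (w : List ℤ) : Prop :=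
  ∀ i : ℤ, 1 ≤ i → i ≤ (k : ℤ) → lev w i = 0

/-- Membership in `W(k,r)`: vacillating tableaux of dimension `k`, length `r`, shape `∅`. -/
def WMem (k r : ℕ) (w : List ℤ) : Prop :=
  IsVacillating k w ∧ w.length = r ∧ EmptyShape k w

/-- A filling of a Young diagram. -/
structure Tableau where
  shape : YoungDiagram
  entry : ℕ → ℕ → ℕ

/-- A standard Young tableau: an injective filling of the diagram with the numbers
`1,…,card`, strictly increasing along rows and columns, zero outside the diagram. -/
def IsSYT (Q : Tableau) : Prop :=
  (∀ i j, (i, j) ∉ Q.shape → Q.entry i j = 0) ∧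
  (∀ i j, (i, j) ∈ Q.shape → 1 ≤ Q.entry i j ∧ Q.entry i j ≤ Q.shape.card) ∧
  (∀ i j i' j', (i, j) ∈ Q.shape → (i', j') ∈ Q.shape →
      Q.entry i j = Q.entry i' j' → (i, j) = (i', j')) ∧
  (∀ i j₁ j₂, j₁ < j₂ → (i, j₂) ∈ Q.shape → Q.entry i j₁ < Q.entry i j₂) ∧
  (∀ i₁ i₂ j, i₁ < i₂ → (i₂, j) ∈ Q.shape → Q.entry i₁ j < Q.entry i₂ j)

/-- The shape has at most `2k+1` rows, all of even length. -/
def EvenRows (k : ℕ) (Q : Tableau) : Prop :=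
  (∀ i, 2 * k + 1 ≤ i → Q.shape.rowLen i = 0) ∧ ∀ i, Even (Q.shape.rowLen i)

/-- Membership in `E(k,r)`: standard Young tableaux with `r` entries whose shape has at
most `2k+1` rows, all of even length. -/
def EMem (k r : ℕ) (Q : Tableau) : Prop :=
  IsSYT Q ∧ Q.shape.card = r ∧ EvenRows k Q

/-- A partition, as a weakly decreasing list of positive integers. -/
def IsPartitionL (μ : List ℕ) : Prop :=
  μ.Pairwise (· ≥ ·) ∧ ∀ x ∈ μ, 0 < x

end OrthoBij

namespace OrthoBij

/-- A two-column skew tableau: inner-shape parameter `a`, right-column length `b`,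
left column `left` and right column `right`, both listed from top to bottom.
The left column occupies rows `a, a+1, …` and the right column rows `0, 1, …, b-1`. -/
structure TwoCol where
  a : ℕ
  b : ℕ
  left : List ℕ
  right : List ℕ

instance : Inhabited TwoCol := ⟨⟨0, 0, [], []⟩⟩

/-- The `i`-th entry of a column, counted from the bottom (`1`-based). -/
def botGet (c : List ℕ) (i : ℕ) : ℕ := c.getD (c.length - i) 0

/-- Row-semistandardness of `T` after sliding the right column down by `s` rows:
whenever the right cell number `t` (now in row `s + t`) has a left neighbour, the left
neighbour is not larger. -/
def SlidOK (T : TwoCol) (s : ℕ) : Prop :=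
  ∀ t, t < T.right.length → T.a ≤ s + t → s + t - T.a < T.left.length →
    T.left.getD (s + t - T.a) 0 ≤ T.right.getD t 0

/-- The residuum of `T` (with tail length `m`): the maximal number of positions the
right column can be slid down while keeping a semistandard skew tableau. -/
noncomputable def residuum (T : TwoCol) (m : ℕ) : ℕ :=
  sSup {s | s ≤ min T.a m ∧ SlidOK T s}

/-- `T` is a valid two-column skew semistandard tableau of shape
`(2^b, 1^m)/(1^a)` with `b ≥ a ≥ 0` both even and residuum at most `1`. -/
def IsTwoCol (m : ℕ) (T : TwoCol) : Prop :=
  Even T.a ∧ Even T.b ∧ T.a ≤ T.b ∧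
  T.left.length = T.b - T.a + m ∧ T.right.length = T.b ∧
  (∀ x ∈ T.left, 0 < x) ∧ (∀ x ∈ T.right, 0 < x) ∧
  T.left.Pairwise (· < ·) ∧ T.right.Pairwise (· < ·) ∧
  SlidOK T 0 ∧ residuum T m ≤ 1

/-- The tail of `T`: the bottom `m` entries of the left column. -/
def tailOf (T : TwoCol) : List ℕ := T.left.drop (T.b - T.a)

/-- The tail root of `T`: the topmost tail entry. -/
def tailRoot (T : TwoCol) : ℕ := T.left.getD (T.b - T.a) 0

/-- The lower tail of `T`: the tail without the tail root. -/
def lowerTail (T : TwoCol) : List ℕ := T.left.drop (T.b - T.a + 1)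

/-- The fin of `T`: the largest (bottom) entry of the right column. -/
def finOf (T : TwoCol) : ℕ := botGet T.right 1

/-- `x` occurs as a gap in the (strictly increasing) column `col`. -/
def IsGapIn (col : List ℕ) (x : ℕ) : Prop := x ∈ col ∧ 1 < x ∧ (x - 1) ∉ col

/-- `x` occurs as a slot in the column `col`. -/
def IsSlotIn (col : List ℕ) (x : ℕ) : Prop := x ∈ col ∧ (x + 1) ∉ col

/-- `T` is of type 1: residuum `0` and all gaps lie in the tail. -/
def Type1 (m : ℕ) (T : TwoCol) : Prop :=
  residuum T m = 0 ∧ (∀ x, ¬ IsGapIn T.right x) ∧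
  ∀ x, IsGapIn T.left x → x ∈ tailOf T

/-- `T` is of type 2: residuum `1` and all gaps lie in the lower tail. -/
def Type2 (m : ℕ) (T : TwoCol) : Prop :=
  residuum T m = 1 ∧ (∀ x, ¬ IsGapIn T.right x) ∧
  ∀ x, IsGapIn T.left x → x ∈ lowerTail T

/-- `T` is of type 3: residuum `1`, the fin is a gap, and all other gaps lie in the
lower tail. -/
def Type3 (m : ℕ) (T : TwoCol) : Prop :=
  residuum T m = 1 ∧ IsGapIn T.right (finOf T) ∧
  (∀ x, IsGapIn T.right x → x = finOf T) ∧
  ∀ x, IsGapIn T.left x → x ∈ lowerTail T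

/-- A skew semistandard tableau of rectangular outer shape, recorded by its columns
(from left to right, each from top to bottom, bottom-aligned in the rectangle). -/
structure RectCols where
  cols : List (List ℕ)

/-- Validity of such a tableau with `c` columns, all of the same length parity. -/
def IsRect (c : ℕ) (S : RectCols) : Prop :=
  S.cols.length = c ∧
  (∀ col ∈ S.cols, col.Pairwise (· < ·) ∧ ∀ x ∈ col, 0 < x) ∧
  (∀ t, t + 1 < c → (S.cols.getD t []).length ≤ (S.cols.getD (t + 1) []).length) ∧
  (∀ t u, t < c → u < c →
      (S.cols.getD t []).length % 2 = (S.cols.getD u []).length % 2) ∧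
  (∀ t i, t + 1 < c → 1 ≤ i → i ≤ (S.cols.getD t []).length →
      botGet (S.cols.getD t []) i ≤ botGet (S.cols.getD (t + 1) []) i)

/-- The leftmost column `S^L` of `S`. -/
def SL (S : RectCols) : List ℕ := S.cols.getD 0 []

/-- `S` is even: its columns have even length. -/
def SEven (S : RectCols) : Prop := (SL S).length % 2 = 0

/-- A tuple `L = (T₁, …, T_ℓ, S)`. -/
structure KTupleData where
  Ts : List TwoCol
  S : RectCols

/-- The `j`-th two-column tableau of the tuple (`0`-based). -/
def TAt (d : KTupleData) (j : ℕ) : TwoCol := d.Ts.getD j default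

/-- The residuum `r_j` of the `j`-th tableau. -/
noncomputable def resAt (μ : List ℕ) (d : KTupleData) (j : ℕ) : ℕ :=
  residuum (TAt d j) (μ.getD j 0)

/-- Structural validity of the tuple for `SO(2k+1)` and the partition `μ`. -/
def IsKTuple (k : ℕ) (μ : List ℕ) (d : KTupleData) : Prop :=
  d.Ts.length = μ.length ∧
  (∀ j, j < μ.length → IsTwoCol (μ.getD j 0) (TAt d j)) ∧
  IsRect (2 * k + 1 - 2 * μ.length) d.S

/-- All columns of the tuple, ordered from left to right. -/
def colListOf (d : KTupleData) : List (List ℕ) :=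
  (d.Ts.map (fun T => [T.left, T.right])).flatten ++ d.S.cols

/-- Condition (H). -/
noncomputable def CondH (μ : List ℕ) (d : KTupleData) : Prop :=
  ∀ i, i + 1 < μ.length →
    (TAt d i).b ≤ (TAt d (i + 1)).b - (TAt d (i + 1)).a +
      2 * resAt μ d i * resAt μ d (i + 1)

/-- Condition (H'). -/
noncomputable def CondH' (μ : List ℕ) (d : KTupleData) : Prop :=
  0 < μ.length →
    (SEven d.S → (TAt d (μ.length - 1)).b ≤ (SL d.S).length) ∧
    (¬ SEven d.S →
      (TAt d (μ.length - 1)).b ≤ (SL d.S).length - 1 + 2 * resAt μ d (μ.length - 1))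

/-- Condition (S): `S` contains no gap. -/
def CondS (d : KTupleData) : Prop :=
  ∀ col ∈ d.S.cols, ∀ x, ¬ IsGapIn col x

/-- Condition (T1) without its final (tail-root) clause. -/
noncomputable def CondT1noTR (μ : List ℕ) (d : KTupleData) : Prop :=
  (∀ i, i < μ.length →
      Type1 (μ.getD i 0) (TAt d i) ∨ Type2 (μ.getD i 0) (TAt d i) ∨
        Type3 (μ.getD i 0) (TAt d i)) ∧
  (∀ i, i + 1 < μ.length → Type3 (μ.getD i 0) (TAt d i) →
      resAt μ d (i + 1) = 1 ∧ finOf (TAt d i) ≤ finOf (TAt d (i + 1))) ∧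
  (0 < μ.length → Type3 (μ.getD (μ.length - 1) 0) (TAt d (μ.length - 1)) →
      ¬ SEven d.S)

/-- The tail-root clause of condition (T1). -/
noncomputable def CondT1TR (μ : List ℕ) (d : KTupleData) : Prop :=
  0 < μ.length → Type1 (μ.getD (μ.length - 1) 0) (TAt d (μ.length - 1)) →
    ¬ SEven d.S → tailRoot (TAt d (μ.length - 1)) ≤ botGet (SL d.S) 1

/-- Condition (T1). -/
noncomputable def CondT1 (μ : List ℕ) (d : KTupleData) : Prop :=
  CondT1noTR μ d ∧ CondT1TR μ d

/-- Condition (T2): the tails, placed side by side with tops aligned, form a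
semistandard Young tableau. -/
def CondT2 (μ : List ℕ) (d : KTupleData) : Prop :=
  ∀ i t, i + 1 < μ.length → t < (tailOf (TAt d (i + 1))).length →
    (tailOf (TAt d i)).getD t 0 ≤ (tailOf (TAt d (i + 1))).getD t 0

/-- Condition (G): for every value `x` there is an injection from the occurrences of
`x` as a gap to the occurrences of `x - 1` as a slot, each gap being assigned a slot
occurrence in a column strictly to its right. -/
def CondG (d : KTupleData) : Prop :=
  ∀ x : ℕ,
    ∃ f : {c : ℕ // c < (colListOf d).length ∧ IsGapIn ((colListOf d).getD c []) x} →
        {c : ℕ // c < (colListOf d).length ∧ IsSlotIn ((colListOf d).getD c []) (x - 1)},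
      Function.Injective f ∧
        ∀ c : {c : ℕ // c < (colListOf d).length ∧
            IsGapIn ((colListOf d).getD c []) x}, c.val < (f c).val

/-- `L` has content `λ`: the letter `x` occurs exactly `λ'_x` times altogether, where
`λ'` is the conjugate partition. -/
def CondContent (lam : List ℕ) (d : KTupleData) : Prop :=
  ∀ x : ℕ, 1 ≤ x →
    ((colListOf d).map (fun col => col.count x)).sum =
      lam.countP (fun y => decide (x ≤ y))

end OrthoBij

namespace OrthoBij

/-- The largest row `ρ`, not beyond the bottom cell of the left column, at which a right
cell with entry `e` may sit so that its left neighbour (if any) is not larger. -/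
noncomputable def maxRowOK (T : TwoCol) (e : ℕ) : ℕ :=
  sSup {ρ | ρ ≤ T.a + T.left.length - 1 ∧ (ρ < T.a ∨ T.left.getD (ρ - T.a) 0 ≤ e)}

/-- Beginning at the bottom, slide each cell of the right column down as far as
possible.  Input: right-column entries from bottom to top and the current row bound;
output: the final rows, bottom cell first. -/
noncomputable def slideGo (T : TwoCol) : List ℕ → ℕ → List ℕ
  | [], _ => []
  | e :: rest, bound =>
      min (maxRowOK T e) bound :: slideGo T rest (min (maxRowOK T e) bound - 1)

/-- The final rows of the right-column cells after sliding down (bottom cell first). -/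
noncomputable def slideRows (T : TwoCol) : List ℕ :=
  slideGo T T.right.reverse (T.a + T.left.length - 1)

/-- `^L T`: the left-column entries that have a right neighbour after the sliding. -/
noncomputable def hatL (T : TwoCol) : List ℕ :=
  ((List.range T.left.length).filter
    (fun u => decide ((T.a + u) ∈ slideRows T))).map (fun u => T.left.getD u 0)

/-- Insert a (row, entry) pair into a list sorted by row. -/
def insertByRow (p : ℕ × ℕ) : List (ℕ × ℕ) → List (ℕ × ℕ)
  | [] => [p]
  | q :: rest => if p.1 ≤ q.1 then p :: q :: rest else q :: insertByRow p rest

/-- Sort a list of (row, entry) pairs by row. -/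
def sortByRow : List (ℕ × ℕ) → List (ℕ × ℕ)
  | [] => []
  | p :: rest => insertByRow p (sortByRow rest)

/-- `^R T`: the right-column entries together with the left-column entries that have no
right neighbour after the sliding, read from top to bottom. -/
noncomputable def hatR (T : TwoCol) : List ℕ :=
  (sortByRow ((slideRows T).zip T.right.reverse ++
    ((List.range T.left.length).filter
      (fun u => decide ((T.a + u) ∉ slideRows T))).map
        (fun u => (T.a + u, T.left.getD u 0)))).map Prod.snd

/-- The smallest row `σ`, not beyond the top cell of the right column, at which a left
cell with entry `e` may sit so that its right neighbour (if any) is not smaller. -/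
noncomputable def minRowOK (T : TwoCol) (e : ℕ) : ℕ :=
  sInf {σ | T.right.length ≤ σ ∨ e ≤ T.right.getD σ 0}

/-- Beginning at the top, slide each cell of the left column up as far as possible. -/
noncomputable def upGo (T : TwoCol) : List ℕ → ℕ → List ℕ
  | [], _ => []
  | e :: rest, low =>
      max (minRowOK T e) low :: upGo T rest (max (minRowOK T e) low + 1)

/-- The final rows of the left-column cells after sliding up (top cell first). -/
noncomputable def upRows (T : TwoCol) : List ℕ := upGo T T.left 0

/-- The index of the largest entry of the right column without left neighbour. -/
noncomputable def starIdx (T : TwoCol) : ℕ :=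
  sSup {t | t < T.right.length ∧ t ∉ upRows T}

/-- `T^{L*}`: all left-column entries together with the largest right-column entry
without left neighbour, read from top to bottom. -/
noncomputable def starL (T : TwoCol) : List ℕ :=
  (sortByRow ((upRows T).zip T.left ++
    [(starIdx T, T.right.getD (starIdx T) 0)])).map Prod.snd

/-- `T^{R*}`: the remaining right-column entries. -/
noncomputable def starR (T : TwoCol) : List ℕ :=
  ((List.range T.right.length).filter (fun t => decide (t ≠ starIdx T))).map
    (fun t => T.right.getD t 0)

/-- Condition (H) for a pair `(T, U)` with tail lengths `mT`, `mU`. -/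
noncomputable def CondHpair (mT mU : ℕ) (T U : TwoCol) : Prop :=
  T.right.length ≤ U.left.length - mU + 2 * residuum T mT * residuum U mU

/-- Condition (A1) for a pair `(T, U)`. -/
noncomputable def CondA1pair (mT mU : ℕ) (T U : TwoCol) : Prop :=
  (residuum T mT * residuum U mU = 0 →
    ∀ i, 1 ≤ i → i ≤ T.right.length →
      i ≤ (hatL U).length ∧ botGet T.right i ≤ botGet (hatL U) i) ∧
  (residuum T mT * residuum U mU = 1 →
    ∀ i, 1 ≤ i → i ≤ (starR T).length →
      i ≤ (hatL U).length ∧ botGet (starR T) i ≤ botGet (hatL U) i)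

/-- Condition (A2) for a pair `(T, U)`. -/
noncomputable def CondA2pair (mT mU : ℕ) (T U : TwoCol) : Prop :=
  (residuum T mT * residuum U mU = 0 →
    ∀ i, 1 ≤ i → i + mT - mU ≤ (hatR T).length →
      i ≤ U.left.length ∧ botGet (hatR T) (i + mT - mU) ≤ botGet U.left i) ∧
  (residuum T mT * residuum U mU = 1 →
    ∀ i, 1 ≤ i → i + mT - mU ≤ (hatR T).length →
      i ≤ (starL U).length ∧ botGet (hatR T) (i + mT - mU) ≤ botGet (starL U) i)

/-- The pair `(T, U)` is admissible. -/
noncomputable def AdmissiblePair (mT mU : ℕ) (T U : TwoCol) : Prop :=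
  CondHpair mT mU T U ∧ CondA1pair mT mU T U ∧ CondA2pair mT mU T U

/-- Condition (H') for the pair `(T, S)`. -/
noncomputable def CondH'pair (mT : ℕ) (T : TwoCol) (S : RectCols) : Prop :=
  (SEven S → T.right.length ≤ (SL S).length) ∧
  (¬ SEven S → T.right.length ≤ (SL S).length - 1 + 2 * residuum T mT)

/-- Condition (A1') for the pair `(T, S)`. -/
noncomputable def CondA1'pair (mT : ℕ) (T : TwoCol) (S : RectCols) : Prop :=
  ((SEven S ∨ residuum T mT = 0) →
    ∀ i, 1 ≤ i → i ≤ T.right.length →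
      i ≤ (SL S).length ∧ botGet T.right i ≤ botGet (SL S) i) ∧
  (¬ (SEven S ∨ residuum T mT = 0) →
    ∀ i, 1 ≤ i → i ≤ (starR T).length →
      i ≤ (SL S).length ∧ botGet (starR T) i ≤ botGet (SL S) i)

/-- Condition (A2') for the pair `(T, S)`. -/
noncomputable def CondA2'pair (mT : ℕ) (T : TwoCol) (S : RectCols) : Prop :=
  ((¬ SEven S ∧ residuum T mT = 0) →
    ∀ i, 1 ≤ i → i + mT - 1 ≤ (hatR T).length →
      i ≤ (SL S).length ∧ botGet (hatR T) (i + mT - 1) ≤ botGet (SL S) i) ∧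
  (¬ (¬ SEven S ∧ residuum T mT = 0) →
    ∀ i, 1 ≤ i → i + mT ≤ (hatR T).length →
      i ≤ (SL S).length ∧ botGet (hatR T) (i + mT) ≤ botGet (SL S) i)

/-- The pair `(T, S)` is admissible. -/
noncomputable def AdmissibleS (mT : ℕ) (T : TwoCol) (S : RectCols) : Prop :=
  CondH'pair mT T S ∧ CondA1'pair mT T S ∧ CondA2'pair mT T S

end OrthoBij

/-!
Outside their tails, the columns of such a tuple are as small as they can be: by the type
conditions and (S), the left column of `T` reads `1, …, b - a` followed by its tail, the right
column reads `1, …, b - 1` followed by the fin, and `S^L` reads `1, …, n`. The slides can then be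
computed explicitly: `^R T` is the right column of `T` followed by the tail entries from
position `r_T` on, and, when `r_U = 1`, `U^{L*}` is `1, …, b - a + 1`, the fin and the lower
tail. Comparing bottom-aligned entries, (A2) and (A2') split into comparisons of tail entries,
which together are exactly (T2), and comparisons of the runs `1, 2, …` and fins, which follow
from (H), (H') and the fin clause of (T1) — except for the bottom entry of `S^L` against the
tail root of a last tableau of type 1 when `S` is odd, which is the tail-root clause.
-/

namespace OrthoBij

open List

section Columns

lemma getD_mem_of_lt {col : List ℕ} {j : ℕ} (hj : j < col.length) : col.getD j 0 ∈ col := by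
  rw [getD_eq_getElem _ _ hj]
  exact getElem_mem _

lemma Pairwise.getD_lt {col : List ℕ} (hs : col.Pairwise (· < ·)) {i j : ℕ} (hij : i < j)
    (hj : j < col.length) : col.getD i 0 < col.getD j 0 := by
  rw [getD_eq_getElem _ _ (by omega), getD_eq_getElem _ _ hj]
  exact pairwise_iff_getElem.1 hs i j (by omega) hj hij

lemma Pairwise.getD_le {col : List ℕ} (hs : col.Pairwise (· < ·)) {i j : ℕ} (hij : i ≤ j)
    (hj : j < col.length) : col.getD i 0 ≤ col.getD j 0 := by
  rcases hij.lt_or_eq with h | rfl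
  · exact (Pairwise.getD_lt hs h hj).le
  · rfl

lemma botGet_append_of_le_length (X : List ℕ) {Y : List ℕ} {i : ℕ} (h : i ≤ Y.length) :
    botGet (X ++ Y) i = botGet Y i := by
  unfold botGet
  rw [length_append, getD_append_right _ _ _ _ (by omega)]
  congr 1
  omega

lemma botGet_append_of_length_lt {X Y : List ℕ} {i : ℕ} (h : Y.length < i)
    (h' : i ≤ X.length + Y.length) : botGet (X ++ Y) i = botGet X (i - Y.length) := by
  unfold botGet
  rw [length_append, getD_append _ _ _ _ (by omega)]
  congr 1
  omega

lemma botGet_range' {n i : ℕ} (hi : 1 ≤ i) (h : i ≤ n) : botGet (range' 1 n) i = n + 1 - i := by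
  unfold botGet
  rw [length_range', getD_eq_getElem _ _ (by rw [length_range']; omega), getElem_range']
  omega

/-- In a strictly increasing column, an entry that is not a gap is `1` or the successor of the
entry just above it. -/
lemma getD_eq_succ_of_gaps_mem_drop {col : List ℕ} (hs : col.Pairwise (· < ·))
    (hpos : ∀ x ∈ col, 0 < x) {q : ℕ} (hq : q ≤ col.length)
    (hg : ∀ x, IsGapIn col x → x ∈ col.drop q) : ∀ j < q, col.getD j 0 = j + 1 := by
  have not_gap : ∀ t < q, col.getD t 0 = 1 ∨ ∃ i < t, col.getD i 0 = col.getD t 0 - 1 := by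
    intro t ht
    have hmem := getD_mem_of_lt (show t < col.length by omega)
    have := hpos _ hmem
    by_contra! hne
    obtain ⟨x, hx, hxe⟩ := List.mem_iff_getElem.1 (hg _ ⟨hmem, by grind, fun hprev => by
      obtain ⟨i, hi, hie⟩ := List.mem_iff_getElem.1 hprev
      rw [← getD_eq_getElem _ 0] at hie
      rcases lt_or_ge i t with hit | hit
      · exact hne.2 i hit hie
      · have := Pairwise.getD_le hs hit hi
        omega⟩)
    rw [getElem_drop, ← getD_eq_getElem _ 0] at hxe
    have := Pairwise.getD_lt hs (show t < q + x by omega) (by grind)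
    omega
  intro j
  induction j with
  | zero =>
    intro hq0
    rcases not_gap 0 hq0 with h | ⟨i, hi, _⟩
    · exact h
    · omega
  | succ j ih =>
    intro hj
    have hprev := ih (by omega)
    have hlt := Pairwise.getD_lt hs (show j < j + 1 by omega) (by omega)
    rcases not_gap (j + 1) hj with h | ⟨i, hi, hie⟩
    · omega
    · have := Pairwise.getD_le hs (show i ≤ j by omega) (by omega)
      omega

lemma eq_range'_append_drop_of_gaps_mem_drop {col : List ℕ} (hs : col.Pairwise (· < ·))
    (hpos : ∀ x ∈ col, 0 < x) {q : ℕ} (hq : q ≤ col.length)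
    (hg : ∀ x, IsGapIn col x → x ∈ col.drop q) : col = range' 1 q ++ col.drop q := by
  conv_lhs => rw [← take_append_drop q col]
  congr 1
  apply ext_getElem (by simp; omega)
  intro i h1 h2
  rw [getElem_take, getElem_range', ← getD_eq_getElem col 0,
    getD_eq_succ_of_gaps_mem_drop hs hpos hq hg i (by simpa using h2)]
  omega

lemma eq_range'_of_forall_not_isGapIn {col : List ℕ} (hs : col.Pairwise (· < ·))
    (hpos : ∀ x ∈ col, 0 < x) (hg : ∀ x, ¬ IsGapIn col x) : col = range' 1 col.length := by
  simpa using eq_range'_append_drop_of_gaps_mem_drop hs hpos le_rfl (fun x hx => (hg x hx).elim)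

end Columns

section SortByRow

def rowLE (p q : ℕ × ℕ) : Prop := p.1 ≤ q.1

instance : DecidableRel rowLE := fun p q => Nat.decLe p.1 q.1
instance : Std.Total rowLE where
  total p q := Nat.le_total p.1 q.1
instance : IsTrans (ℕ × ℕ) rowLE := ⟨fun _ _ _ => Nat.le_trans⟩

lemma sortByRow_eq_insertionSort (l : List (ℕ × ℕ)) : sortByRow l = l.insertionSort rowLE := by
  induction l with
  | nil => rfl
  | cons p rest ih =>
    rw [sortByRow, ih, insertionSort_cons]
    generalize rest.insertionSort rowLE = l
    induction l with
    | nil => rfl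
    | cons q l ih' => simp only [insertByRow, orderedInsert, ih']; rfl

lemma sortByRow_eq_of_perm {l Z : List (ℕ × ℕ)} (hZ : Z.Pairwise (fun p q => p.1 < q.1))
    (h : l ~ Z) : sortByRow l = Z := by
  rw [sortByRow_eq_insertionSort]
  have hinj := inj_on_of_nodup_map (f := Prod.fst) (pairwise_map.2 hZ).nodup
  refine Perm.eq_of_pairwise (le := rowLE) (fun p q hp hq hpq hqp => ?_)
    (pairwise_insertionSort _ _) (hZ.imp le_of_lt) ((perm_insertionSort _ _).trans h)
  exact hinj (((perm_insertionSort _ _).trans h).subset hp) hq (le_antisymm hpq hqp)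

end SortByRow

lemma residuum_bddAbove (T : TwoCol) (m : ℕ) : BddAbove {s | s ≤ min T.a m ∧ SlidOK T s} :=
  ⟨min T.a m, fun _ hx => hx.1⟩

lemma residuum_spec {m : ℕ} {T : TwoCol} (h0 : SlidOK T 0) :
    residuum T m ≤ min T.a m ∧ SlidOK T (residuum T m) :=
  Nat.sSup_mem (s := {s | s ≤ min T.a m ∧ SlidOK T s}) ⟨0, Nat.zero_le _, h0⟩
    (residuum_bddAbove T m)

lemma le_residuum {m : ℕ} {T : TwoCol} {s : ℕ} (hs : s ≤ min T.a m) (hok : SlidOK T s) :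
    s ≤ residuum T m :=
  le_csSup (residuum_bddAbove T m) ⟨hs, hok⟩

section Slide

variable (T : TwoCol)

lemma le_maxRowOK {e ρ : ℕ} (h1 : ρ ≤ T.a + T.left.length - 1)
    (h2 : ρ < T.a ∨ T.left.getD (ρ - T.a) 0 ≤ e) : ρ ≤ maxRowOK T e :=
  le_csSup ⟨T.a + T.left.length - 1, fun _ hx => hx.1⟩ ⟨h1, h2⟩

lemma maxRowOK_le {e n : ℕ} (h1 : n ≤ T.a + T.left.length - 1)
    (h2 : n < T.a ∨ T.left.getD (n - T.a) 0 ≤ e)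
    (h : ∀ ρ ≤ T.a + T.left.length - 1, (ρ < T.a ∨ T.left.getD (ρ - T.a) 0 ≤ e) → ρ ≤ n) :
    maxRowOK T e ≤ n :=
  csSup_le ⟨n, h1, h2⟩ fun ρ hρ => h ρ hρ.1 hρ.2

lemma slideGo_eq_of_le_maxRowOK : ∀ (es : List ℕ) (bound : ℕ), es.length ≤ bound + 1 →
    (∀ j < es.length, bound - j ≤ maxRowOK T (es.getD j 0)) →
    slideGo T es bound = (range' (bound + 1 - es.length) es.length).reverse
  | [], _, _, _ => by simp [slideGo]
  | e :: rest, bound, hlen, h => by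
    have h0 : bound ≤ maxRowOK T e := by simpa using h 0 (by simp)
    rw [slideGo, min_eq_right h0, slideGo_eq_of_le_maxRowOK rest (bound - 1)
      (by simp at hlen ⊢; omega) fun j hj => by
        simpa [show bound - 1 - j = bound - (j + 1) by omega] using h (j + 1) (by simp; omega)]
    simp only [length_cons] at hlen ⊢
    obtain rfl | hpos := Nat.eq_zero_or_pos bound
    · obtain rfl : rest = [] := length_eq_zero_iff.1 (by omega)
      rfl
    rw [show bound + 1 - (rest.length + 1) = bound - rest.length by omega, range'_concat,
      reverse_append, show bound - rest.length + 1 * rest.length = bound by omega,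
      show bound - 1 + 1 - rest.length = bound - rest.length by omega]
    rfl

end Slide

section SlideUp

variable (T : TwoCol)

lemma minRowOK_le {e σ : ℕ} (h : e ≤ T.right.getD σ 0) : minRowOK T e ≤ σ :=
  Nat.sInf_le (Or.inr h)

lemma minRowOK_eq {e σ : ℕ} (h : T.right.length ≤ σ ∨ e ≤ T.right.getD σ 0)
    (hmin : ∀ τ < σ, τ < T.right.length ∧ T.right.getD τ 0 < e) : minRowOK T e = σ := by
  unfold minRowOK
  refine le_antisymm (Nat.sInf_le h) (le_of_not_gt fun hlt => ?_)
  have hmem := Nat.sInf_mem (s := {σ | T.right.length ≤ σ ∨ e ≤ T.right.getD σ 0}) ⟨σ, h⟩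
  have := hmin _ hlt
  rcases hmem with hmem | hmem <;> omega

lemma upGo_append_of_minRowOK_le : ∀ (xs ys : List ℕ) (low : ℕ),
    (∀ j < xs.length, minRowOK T (xs.getD j 0) ≤ low + j) →
    upGo T (xs ++ ys) low = range' low xs.length ++ upGo T ys (low + xs.length)
  | [], _, _, _ => rfl
  | x :: xs, ys, low, h => by
    have h0 : minRowOK T x ≤ low := by simpa using h 0 (by simp)
    rw [cons_append, upGo, max_eq_right h0, upGo_append_of_minRowOK_le xs ys (low + 1)
      fun j hj => by simpa [Nat.add_assoc, Nat.add_comm 1 j] using h (j + 1) (by simp; omega)]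
    simp [range'_succ, Nat.add_assoc, Nat.add_comm 1]

lemma upGo_of_forall_minRowOK_eq {es : List ℕ} {c low : ℕ} (hlow : low ≤ c)
    (h : ∀ x ∈ es, minRowOK T x = c) : upGo T es low = range' c es.length := by
  cases es with
  | nil => rfl
  | cons e rest =>
    rw [upGo, h e mem_cons_self, max_eq_left hlow, length_cons, range'_succ]
    congr 1
    simpa [upGo] using upGo_append_of_minRowOK_le T rest [] (c + 1) fun j hj => by
      rw [h _ (mem_cons_of_mem _ (getD_mem_of_lt hj))]
      omega

end SlideUp

lemma getD_drop (l : List ℕ) (n j : ℕ) : (l.drop n).getD j 0 = l.getD (n + j) 0 := by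
  simp

lemma getD_tailOf (T : TwoCol) (j : ℕ) :
    (tailOf T).getD j 0 = T.left.getD (T.b - T.a + j) 0 :=
  getD_drop _ _ _

lemma tailRoot_eq_getD_tailOf (T : TwoCol) : tailRoot T = (tailOf T).getD 0 0 := by
  rw [getD_tailOf, Nat.add_zero, tailRoot]

lemma lowerTail_eq_drop_tailOf (T : TwoCol) : lowerTail T = (tailOf T).drop 1 := by
  rw [lowerTail, tailOf, drop_drop]

structure IsTyped (m : ℕ) (T : TwoCol) : Prop where
  one_le : 1 ≤ m
  valid : IsTwoCol m T
  type : Type1 m T ∨ Type2 m T ∨ Type3 m T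

namespace IsTyped

variable {m : ℕ} {T : TwoCol}

lemma a_le_b (h : IsTyped m T) : T.a ≤ T.b := h.valid.2.2.1

lemma left_length (h : IsTyped m T) : T.left.length = T.b - T.a + m := h.valid.2.2.2.1

lemma right_length (h : IsTyped m T) : T.right.length = T.b := h.valid.2.2.2.2.1

lemma left_pos (h : IsTyped m T) : ∀ x ∈ T.left, 0 < x := h.valid.2.2.2.2.2.1

lemma right_pos (h : IsTyped m T) : ∀ x ∈ T.right, 0 < x := h.valid.2.2.2.2.2.2.1

lemma left_sorted (h : IsTyped m T) : T.left.Pairwise (· < ·) := h.valid.2.2.2.2.2.2.2.1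

lemma right_sorted (h : IsTyped m T) : T.right.Pairwise (· < ·) := h.valid.2.2.2.2.2.2.2.2.1

lemma tailOf_length (h : IsTyped m T) : (tailOf T).length = m := by
  rw [tailOf, length_drop, h.left_length]
  omega

lemma even_a (h : IsTyped m T) : Even T.a := h.valid.1

lemma even_b (h : IsTyped m T) : Even T.b := h.valid.2.1

lemma slidOK_zero (h : IsTyped m T) : SlidOK T 0 := h.valid.2.2.2.2.2.2.2.2.2.1

lemma residuum_le_one (h : IsTyped m T) : residuum T m ≤ 1 := h.valid.2.2.2.2.2.2.2.2.2.2

lemma residuum_eq_zero_or_one (h : IsTyped m T) : residuum T m = 0 ∨ residuum T m = 1 := by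
  have := h.residuum_le_one
  omega

lemma residuum_le_a (h : IsTyped m T) : residuum T m ≤ T.a :=
  (residuum_spec h.slidOK_zero).1.trans (min_le_left _ _)

lemma residuum_le_m (h : IsTyped m T) : residuum T m ≤ m :=
  (residuum_spec h.slidOK_zero).1.trans (min_le_right _ _)

lemma type1_of_residuum_eq_zero (h : IsTyped m T) (hr : residuum T m = 0) : Type1 m T := by
  rcases h.type with h1 | h2 | h3
  · exact h1
  · exact absurd h2.1 (by omega)
  · exact absurd h3.1 (by omega)

lemma gaps_left_mem_drop (h : IsTyped m T) :
    ∀ x, IsGapIn T.left x → x ∈ T.left.drop (T.b - T.a) := by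
  have hsub : T.left.drop (T.b - T.a + 1) ⊆ T.left.drop (T.b - T.a) := by
    rw [← drop_drop]
    exact drop_subset _ _
  rcases h.type with h1 | h2 | h3
  · exact h1.2.2
  · exact fun x hx => hsub (h2.2.2 x hx)
  · exact fun x hx => hsub (h3.2.2.2 x hx)

lemma left_eq (h : IsTyped m T) : T.left = range' 1 (T.b - T.a) ++ tailOf T :=
  eq_range'_append_drop_of_gaps_mem_drop h.left_sorted h.left_pos
    (by rw [h.left_length]; omega) h.gaps_left_mem_drop

lemma getD_left_of_lt (h : IsTyped m T) {u : ℕ} (hu : u < T.b - T.a) :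
    T.left.getD u 0 = u + 1 := by
  rw [h.left_eq, getD_append _ _ _ _ (by simpa using hu),
    getD_eq_getElem _ _ (by simpa using hu), getElem_range']
  omega

lemma tailOf_sorted (h : IsTyped m T) : (tailOf T).Pairwise (· < ·) :=
  h.left_sorted.sublist (drop_sublist _ _)

lemma sub_lt_tailRoot (h : IsTyped m T) : T.b - T.a < (tailOf T).getD 0 0 := by
  have hlen : T.b - T.a < T.left.length := by
    rw [h.left_length]
    have := h.one_le
    omega
  rw [getD_tailOf, Nat.add_zero]
  rcases Nat.eq_zero_or_pos (T.b - T.a) with hz | hpos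
  · rw [hz] at hlen ⊢
    exact h.left_pos _ (getD_mem_of_lt hlen)
  · have hprev := h.getD_left_of_lt (show T.b - T.a - 1 < T.b - T.a by omega)
    have := Pairwise.getD_lt h.left_sorted (show T.b - T.a - 1 < T.b - T.a by omega)
      hlen
    omega

lemma gaps_right_mem_drop (h : IsTyped m T) :
    ∀ x, IsGapIn T.right x → x ∈ T.right.drop (T.b - 1) := by
  intro x hx
  rcases h.type with h1 | h2 | h3
  · exact (h1.2.1 x hx).elim
  · exact (h2.2.1 x hx).elim
  · have hb : 1 ≤ T.b := h.right_length ▸ length_pos_of_mem hx.1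
    rw [h3.2.2.1 x hx, finOf, botGet, h.right_length]
    simpa using getD_mem_of_lt (col := T.right.drop (T.b - 1)) (j := 0)
      (by rw [length_drop, h.right_length]; omega)

lemma right_eq (h : IsTyped m T) (hb : 1 ≤ T.b) :
    T.right = range' 1 (T.b - 1) ++ [finOf T] := by
  have hlen := h.right_length
  have hdrop : T.right.drop (T.b - 1) = [finOf T] := by
    obtain ⟨x, hx⟩ := length_eq_one_iff.1 (show (T.right.drop (T.b - 1)).length = 1 by
      rw [length_drop]; omega)
    have := getD_drop T.right (T.b - 1) 0
    rw [hx, Nat.add_zero] at this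
    rw [hx, finOf, botGet, hlen, ← this]
    rfl
  rw [← hdrop]
  exact eq_range'_append_drop_of_gaps_mem_drop h.right_sorted
    h.right_pos (by omega) h.gaps_right_mem_drop

lemma getD_right_of_lt (h : IsTyped m T) {t : ℕ} (ht : t < T.b - 1) :
    T.right.getD t 0 = t + 1 := by
  rw [h.right_eq (by omega), getD_append _ _ _ _ (by simpa using ht),
    getD_eq_getElem _ _ (by simpa using ht), getElem_range']
  omega

lemma getD_right_pred (h : IsTyped m T) : T.right.getD (T.b - 1) 0 = finOf T := by
  rw [finOf, botGet, h.right_length]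

lemma finOf_eq_b_of_not_type3 (h : IsTyped m T) (hT : Type1 m T ∨ Type2 m T) :
    finOf T = T.b := by
  have hgaps : ∀ x, ¬ IsGapIn T.right x := by
    rcases hT with h1 | h2
    · exact h1.2.1
    · exact h2.2.1
  have hcol := eq_range'_of_forall_not_isGapIn h.right_sorted
    h.right_pos hgaps
  rw [h.right_length] at hcol
  rcases Nat.eq_zero_or_pos T.b with hb | hb
  · rw [finOf, hcol, hb]
    rfl
  · rw [finOf, hcol, botGet_range' le_rfl hb]
    omega

lemma b_lt_finOf_of_type3 (h : IsTyped m T) (h3 : Type3 m T) : T.b < finOf T := by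
  have hgap := h3.2.1
  have hb : 2 ≤ T.b := by
    have := h.right_length ▸ length_pos_of_mem hgap.1
    obtain ⟨c, hc⟩ := h.even_b
    omega
  have hprev := h.getD_right_of_lt (show T.b - 2 < T.b - 1 by omega)
  have hlt := Pairwise.getD_lt h.right_sorted (show T.b - 2 < T.b - 1 by omega)
    (by rw [h.right_length]; omega)
  rw [h.getD_right_pred] at hlt
  have hne : finOf T ≠ T.b := fun heq => hgap.2.2 <| by
    rw [heq, show T.b - 1 = T.b - 2 + 1 by omega, ← hprev]
    exact getD_mem_of_lt (by rw [h.right_length]; omega)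
  omega

lemma b_le_finOf (h : IsTyped m T) : T.b ≤ finOf T := by
  rcases h.type with h1 | h2 | h3
  · exact (h.finOf_eq_b_of_not_type3 (Or.inl h1)).ge
  · exact (h.finOf_eq_b_of_not_type3 (Or.inr h2)).ge
  · exact (h.b_lt_finOf_of_type3 h3).le

lemma add_one_le_getD_right (h : IsTyped m T) {t : ℕ} (ht : t < T.b) :
    t + 1 ≤ T.right.getD t 0 := by
  rcases Nat.lt_or_ge t (T.b - 1) with hlt | hge
  · rw [h.getD_right_of_lt hlt]
  · rw [show t = T.b - 1 by omega, h.getD_right_pred]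
    have := h.b_le_finOf
    omega

/-- Sliding the right column down by `s ≤ a` rows only confronts right cells with tail
entries in the bottom `s` rows, since the left column starts with `1, 2, …, b - a`. -/
lemma slidOK_of_tail_le (h : IsTyped m T) {s : ℕ} (hs : s ≤ T.a)
    (htail : ∀ j < s, j < m → (tailOf T).getD j 0 ≤ T.right.getD (T.b - s + j) 0) :
    SlidOK T s := by
  intro t ht hat hleft
  have := h.a_le_b
  rw [h.right_length] at ht
  rw [h.left_length] at hleft
  rcases Nat.lt_or_ge (s + t - T.a) (T.b - T.a) with hu | hu
  · rw [h.getD_left_of_lt hu]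
    have := h.add_one_le_getD_right ht
    omega
  · have := htail (s + t - T.b) (by omega) (by omega)
    rwa [getD_tailOf, show T.b - T.a + (s + t - T.b) = s + t - T.a by omega,
      show T.b - s + (s + t - T.b) = t by omega] at this

lemma b_lt_tailRoot_of_residuum_eq_zero (h : IsTyped m T) (hr : residuum T m = 0) :
    T.b < (tailOf T).getD 0 0 := by
  have := h.sub_lt_tailRoot
  by_contra! hroot
  have ha : 1 ≤ T.a := by omega
  have hslid : SlidOK T 1 := h.slidOK_of_tail_le ha fun j hj _ => by
    rw [show j = 0 by omega, Nat.add_zero, h.getD_right_pred]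
    exact hroot.trans h.b_le_finOf
  have := le_residuum (m := m) (le_min ha h.one_le) hslid
  omega

lemma two_le_a_of_residuum_eq_one (h : IsTyped m T) (hr : residuum T m = 1) : 2 ≤ T.a := by
  obtain ⟨c, hc⟩ := h.even_a
  have := h.residuum_le_a
  omega

/-- With residuum `1` the root is not a gap, so it continues the run `1, …, b - a`. -/
lemma tailRoot_eq_of_residuum_eq_one (h : IsTyped m T) (hr : residuum T m = 1) :
    (tailOf T).getD 0 0 = T.b - T.a + 1 := by
  have hgaps : ∀ x, IsGapIn T.left x → x ∈ T.left.drop (T.b - T.a + 1) := by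
    rcases h.type with h1 | h2 | h3
    · exact absurd h1.1 (by omega)
    · exact h2.2.2
    · exact h3.2.2.2
  rw [getD_tailOf, Nat.add_zero]
  exact getD_eq_succ_of_gaps_mem_drop h.left_sorted h.left_pos
    (by rw [h.left_length]; have := h.one_le; omega) hgaps _ (Nat.lt_succ_self _)

/-- The right column could otherwise be slid one row further. -/
lemma finOf_lt_getD_tailOf (h : IsTyped m T) {j : ℕ} (hj : residuum T m ≤ j) (hjm : j < m) :
    finOf T < (tailOf T).getD j 0 := by
  suffices finOf T < (tailOf T).getD (residuum T m) 0 from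
    this.trans_le (Pairwise.getD_le h.tailOf_sorted hj (by rw [h.tailOf_length]; exact hjm))
  rcases Nat.eq_zero_or_pos (residuum T m) with hr | hr
  · rw [hr, h.finOf_eq_b_of_not_type3 (Or.inl (h.type1_of_residuum_eq_zero hr))]
    exact h.b_lt_tailRoot_of_residuum_eq_zero hr
  · have hr1 : residuum T m = 1 := by have := h.residuum_le_one; omega
    have ha := h.two_le_a_of_residuum_eq_one hr1
    have hroot := h.tailRoot_eq_of_residuum_eq_one hr1
    have hab := h.a_le_b
    rw [hr1] at hj ⊢
    by_contra! hnext
    have hslid : SlidOK T 2 := h.slidOK_of_tail_le ha fun i hi _ => by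
      rcases Nat.lt_or_ge i 1 with hi0 | hi1
      · rw [show i = 0 by omega, hroot, Nat.add_zero, h.getD_right_of_lt (by omega)]
        omega
      · rw [show i = 1 by omega, show T.b - 2 + 1 = T.b - 1 by omega, h.getD_right_pred]
        exact hnext
    have := le_residuum (m := m) (le_min ha (by omega)) hslid
    omega

lemma getD_left_le_finOf (h : IsTyped m T) {u : ℕ} (hu : u < T.b - T.a + residuum T m) :
    T.left.getD u 0 ≤ finOf T := by
  have := h.b_le_finOf
  rcases Nat.lt_or_ge u (T.b - T.a) with hlt | hge
  · rw [h.getD_left_of_lt hlt]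
    omega
  · have hr : residuum T m = 1 := by have := h.residuum_le_one; omega
    have := h.two_le_a_of_residuum_eq_one hr
    have := h.a_le_b
    rw [show u = T.b - T.a + 0 by omega, ← getD_tailOf, h.tailRoot_eq_of_residuum_eq_one hr]
    omega

/-- The fin slides down exactly by the residuum. -/
lemma maxRowOK_finOf (h : IsTyped m T) (hb : 1 ≤ T.b) :
    maxRowOK T (finOf T) = T.b + residuum T m - 1 := by
  have hlen := h.left_length
  have := h.residuum_le_m
  have := h.a_le_b
  have hrow : T.b + residuum T m - 1 < T.a ∨
      T.left.getD (T.b + residuum T m - 1 - T.a) 0 ≤ finOf T := by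
    rcases Nat.lt_or_ge (T.b + residuum T m - 1) T.a with hlt | hge
    · exact Or.inl hlt
    · exact Or.inr (h.getD_left_le_finOf (by omega))
  refine le_antisymm (maxRowOK_le T (by omega) hrow fun ρ hρ hρfin => ?_)
    (le_maxRowOK T (by omega) hrow)
  by_contra! hlt
  rcases hρfin with hρa | hρfin
  · omega
  · have := h.finOf_lt_getD_tailOf (j := ρ - T.b) (by omega) (by omega)
    rw [getD_tailOf, show T.b - T.a + (ρ - T.b) = ρ - T.a by omega] at this
    omega

lemma slideRows_eq (h : IsTyped m T) :
    slideRows T = (range' (residuum T m) T.b).reverse := by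
  have hlen := h.left_length
  have := h.residuum_le_a
  have := h.residuum_le_m
  have := h.residuum_le_one
  have := h.a_le_b
  rcases Nat.eq_zero_or_pos T.b with hb | hb
  · rw [slideRows, length_eq_zero_iff.1 (h.right_length.trans hb), hb]
    rfl
  have hb2 : 2 ≤ T.b := by obtain ⟨c, hc⟩ := h.even_b; omega
  rw [slideRows, h.right_eq hb, reverse_append, reverse_singleton, singleton_append, slideGo,
    h.maxRowOK_finOf hb, min_eq_left (by omega), slideGo_eq_of_le_maxRowOK T _ _ (by simp; omega)
      fun j hj => le_maxRowOK T (by omega) ?_]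
  · rw [length_reverse, length_range',
      show T.b + residuum T m - 1 - 1 + 1 - (T.b - 1) = residuum T m by omega]
    conv_rhs => rw [show T.b = T.b - 1 + 1 by omega, range'_concat, reverse_append]
    congr 2
    omega
  · simp only [length_reverse, length_range'] at hj
    rcases Nat.lt_or_ge (T.b + residuum T m - 1 - 1 - j) T.a with hlt | hge
    · exact Or.inl hlt
    · right
      rw [h.getD_left_of_lt (by omega), getD_reverse _ (by simpa using hj), length_range',
        getD_eq_getElem _ _ (by simp only [length_range']; omega), getElem_range']
      omega

/-- After sliding, exactly the tail entries from position `r` on have no right neighbour. -/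
lemma hatR_eq (h : IsTyped m T) : hatR T = T.right ++ (tailOf T).drop (residuum T m) := by
  have hlen := h.left_length
  have htlen := h.tailOf_length
  have := h.residuum_le_m
  have := h.residuum_le_a
  have := h.a_le_b
  set r := residuum T m
  have hunmatched : (range T.left.length).filter (fun u => decide (T.a + u ∉ slideRows T)) =
      range' (T.b - T.a + r) (m - r) := by
    apply Pairwise.eq_of_mem_iff (r := (· < ·)) ((pairwise_lt_range).filter _)
      pairwise_lt_range'
    intro u
    simp only [mem_filter, mem_range, mem_range'_1, h.slideRows_eq, mem_reverse,
      decide_eq_true_eq]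
    omega
  have hleft : (range' (T.b - T.a + r) (m - r)).map (fun u => (T.a + u, T.left.getD u 0)) =
      (range' (T.b + r) (m - r)).zip ((tailOf T).drop r) := by
    refine ext_getElem (by simp [htlen]) fun i h1 h2 => ?_
    simp only [getElem_map, getElem_zip, getElem_range', getElem_drop]
    rw [← getD_eq_getElem _ 0, getD_tailOf, Prod.mk.injEq]
    exact ⟨by omega, by congr 1; omega⟩
  set Z := (range' r T.b).zip T.right ++ (range' (T.b + r) (m - r)).zip ((tailOf T).drop r)
  have hrows : Z.map Prod.fst = range' r (T.b + (m - r)) := by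
    rw [map_append, map_fst_zip (by simp [h.right_length]),
      map_fst_zip (by simp [htlen]), ← range'_append, Nat.one_mul, Nat.add_comm r T.b]
  have hsorted : Z.Pairwise (fun p q => p.1 < q.1) := pairwise_map.1 (hrows ▸ pairwise_lt_range')
  have hzip : (range' r T.b).reverse.zip T.right.reverse = ((range' r T.b).zip T.right).reverse :=
    (reverse_zipWith (by simp [h.right_length])).symm
  rw [hatR, hunmatched, hleft, h.slideRows_eq, hzip,
    sortByRow_eq_of_perm hsorted ((reverse_perm _).append_right _), map_append,
    map_snd_zip (by simp [h.right_length]), map_snd_zip (by simp [htlen])]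

lemma lowerTail_length (h : IsTyped m T) : (lowerTail T).length = m - 1 := by
  rw [lowerTail_eq_drop_tailOf, length_drop, h.tailOf_length]

lemma left_eq_of_residuum_eq_one (h : IsTyped m T) (hr : residuum T m = 1) :
    T.left = range' 1 (T.b - T.a + 1) ++ lowerTail T := by
  have htake : (tailOf T).take 1 = [T.b - T.a + 1] := by
    rw [← h.tailRoot_eq_of_residuum_eq_one hr]
    have := h.tailOf_length
    have := h.one_le
    cases htl : tailOf T with
    | nil => simp_all; omega
    | cons x xs => rfl
  rw [h.left_eq, ← take_append_drop 1 (tailOf T), htake, ← lowerTail_eq_drop_tailOf,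
    ← append_assoc, range'_concat, Nat.one_mul, Nat.add_comm 1]

lemma minRowOK_of_finOf_lt (h : IsTyped m T) {x : ℕ} (hx : finOf T < x) :
    minRowOK T x = T.b := by
  have hfin := h.b_le_finOf
  refine minRowOK_eq T (Or.inl h.right_length.le) fun τ hτ => ⟨by rw [h.right_length]; omega, ?_⟩
  rcases Nat.lt_or_ge τ (T.b - 1) with hlt | hge
  · rw [h.getD_right_of_lt hlt]
    omega
  · rw [show τ = T.b - 1 by omega, h.getD_right_pred]
    exact hx

/-- Sliding up, the run `1, …, b - a + 1` meets its equals in the right column, while the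
lower tail, exceeding the fin, ends below the right column. -/
lemma upRows_eq (h : IsTyped m T) (hr : residuum T m = 1) :
    upRows T = range' 0 (T.b - T.a + 1) ++ range' T.b (m - 1) := by
  have ha := h.two_le_a_of_residuum_eq_one hr
  have hab := h.a_le_b
  have hlower : ∀ x ∈ lowerTail T, minRowOK T x = T.b := by
    intro x hx
    obtain ⟨j, hj, rfl⟩ := getElem_of_mem hx
    rw [h.lowerTail_length] at hj
    rw [← getD_eq_getElem _ 0, lowerTail_eq_drop_tailOf, getD_drop]
    exact h.minRowOK_of_finOf_lt (h.finOf_lt_getD_tailOf (by omega) (by omega))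
  rw [upRows, h.left_eq_of_residuum_eq_one hr, upGo_append_of_minRowOK_le T _ _ _ fun j hj => by
      rw [length_range'] at hj
      rw [getD_eq_getElem _ _ (by simpa using hj), getElem_range', Nat.zero_add, Nat.one_mul,
        Nat.add_comm]
      exact minRowOK_le T (h.getD_right_of_lt (by omega)).ge,
    length_range', Nat.zero_add, upGo_of_forall_minRowOK_eq T (by omega) hlower,
    h.lowerTail_length]

lemma starIdx_eq (h : IsTyped m T) (hr : residuum T m = 1) : starIdx T = T.b - 1 := by
  have ha := h.two_le_a_of_residuum_eq_one hr
  have hab := h.a_le_b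
  have hmem : T.b - 1 ∈ {t | t < T.right.length ∧ t ∉ upRows T} := by
    simp only [Set.mem_ofPred_eq, h.upRows_eq hr, mem_append, mem_range'_1, h.right_length]
    omega
  refine le_antisymm (csSup_le ⟨_, hmem⟩ fun t ht => ?_)
    (le_csSup ⟨T.right.length, fun t ht => ht.1.le⟩ hmem)
  have := ht.1
  rw [h.right_length] at this
  omega

lemma starL_eq (h : IsTyped m T) (hr : residuum T m = 1) :
    starL T = range' 1 (T.b - T.a + 1) ++ [finOf T] ++ lowerTail T := by
  have ha := h.two_le_a_of_residuum_eq_one hr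
  have hab := h.a_le_b
  have hlt := h.lowerTail_length
  set Z := (range' 0 (T.b - T.a + 1)).zip (range' 1 (T.b - T.a + 1)) ++ [(T.b - 1, finOf T)] ++
    (range' T.b (m - 1)).zip (lowerTail T)
  have hrows : Z.map Prod.fst = range' 0 (T.b - T.a + 1) ++ [T.b - 1] ++ range' T.b (m - 1) := by
    simp only [Z, map_append]
    rw [map_fst_zip (by simp), map_fst_zip (by simp [hlt])]
    rfl
  have hsorted : Z.Pairwise (fun p q => p.1 < q.1) := by
    refine pairwise_map.1 (hrows ▸ ?_)
    simp only [pairwise_append, pairwise_singleton, mem_range'_1,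
      mem_singleton, mem_append]
    refine ⟨⟨pairwise_lt_range', trivial, fun x hx y hy => ?_⟩, pairwise_lt_range',
      fun x hx y hy => ?_⟩ <;> omega
  have hperm : (range' 0 (T.b - T.a + 1)).zip (range' 1 (T.b - T.a + 1)) ++
      (range' T.b (m - 1)).zip (lowerTail T) ++ [(T.b - 1, finOf T)] ~ Z := by
    simp only [Z, append_assoc]
    exact (perm_append_singleton _ _).append_left _
  rw [starL, h.starIdx_eq hr, h.upRows_eq hr, h.left_eq_of_residuum_eq_one hr,
    zip_append (by simp), h.getD_right_pred, sortByRow_eq_of_perm hsorted hperm]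
  simp only [Z, map_append]
  rw [map_snd_zip (by simp), map_snd_zip (by simp [hlt])]
  rfl

lemma hatR_length (h : IsTyped m T) : (hatR T).length = T.b + (m - residuum T m) := by
  rw [h.hatR_eq, length_append, h.right_length, length_drop, h.tailOf_length]

lemma botGet_hatR_of_le (h : IsTyped m T) {i : ℕ} (hi : i ≤ m - residuum T m) :
    botGet (hatR T) i = (tailOf T).getD (m - i) 0 := by
  have := h.residuum_le_m
  rw [h.hatR_eq, botGet_append_of_le_length _ (by rw [length_drop, h.tailOf_length]; omega),
    botGet, length_drop, h.tailOf_length, getD_drop]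
  congr 1
  omega

lemma botGet_hatR_add (h : IsTyped m T) {j : ℕ} (hj : 1 ≤ j) (hjb : j ≤ T.b) :
    botGet (hatR T) (m - residuum T m + j) = botGet T.right j := by
  rw [h.hatR_eq, botGet_append_of_length_lt (by rw [length_drop, h.tailOf_length]; omega)
    (by rw [length_drop, h.tailOf_length, h.right_length]; omega), length_drop,
    h.tailOf_length]
  congr 1
  omega

lemma botGet_right_of_two_le (h : IsTyped m T) {j : ℕ} (hj : 2 ≤ j) (hjb : j ≤ T.b) :
    botGet T.right j = T.b + 1 - j := by
  rw [h.right_eq (by omega), botGet_append_of_length_lt (by simp; omega) (by simp; omega),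
    length_singleton, botGet_range' (by omega) (by simp; omega)]
  omega

lemma botGet_right_of_not_type3 (h : IsTyped m T) (hT : Type1 m T ∨ Type2 m T) {j : ℕ}
    (hj : 1 ≤ j) (hjb : j ≤ T.b) : botGet T.right j = T.b + 1 - j := by
  rcases Nat.lt_or_ge j 2 with hlt | hge
  · obtain rfl : j = 1 := by omega
    rw [← finOf, h.finOf_eq_b_of_not_type3 hT]
    omega
  · exact h.botGet_right_of_two_le hge hjb

lemma botGet_left_of_le (h : IsTyped m T) {i : ℕ} (hi : i ≤ m) :
    botGet T.left i = (tailOf T).getD (m - i) 0 := by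
  rw [h.left_eq, botGet_append_of_le_length _ (by rw [h.tailOf_length]; omega), botGet,
    h.tailOf_length]

lemma botGet_left_add (h : IsTyped m T) {j : ℕ} (hj : 1 ≤ j) (hjb : j ≤ T.b - T.a) :
    botGet T.left (m + j) = T.b - T.a + 1 - j := by
  rw [h.left_eq, botGet_append_of_length_lt (by rw [h.tailOf_length]; omega)
      (by rw [h.tailOf_length, length_range']; omega), h.tailOf_length,
    Nat.add_sub_cancel_left, botGet_range' hj hjb]

lemma starL_length (h : IsTyped m T) (hr : residuum T m = 1) :
    (starL T).length = T.b - T.a + m + 1 := by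
  have := h.one_le
  simp only [h.starL_eq hr, length_append, length_range', length_singleton, h.lowerTail_length]
  omega

lemma botGet_starL_of_lt (h : IsTyped m T) (hr : residuum T m = 1) {i : ℕ} (hi : i < m) :
    botGet (starL T) i = (tailOf T).getD (m - i) 0 := by
  rw [h.starL_eq hr, botGet_append_of_le_length _ (by rw [h.lowerTail_length]; omega), botGet,
    h.lowerTail_length, lowerTail_eq_drop_tailOf, getD_drop]
  congr 1
  omega

lemma botGet_starL_self (h : IsTyped m T) (hr : residuum T m = 1) :
    botGet (starL T) m = finOf T := by
  have := h.one_le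
  rw [h.starL_eq hr, botGet_append_of_length_lt (by rw [h.lowerTail_length]; omega)
    (by simp [h.lowerTail_length]; omega), h.lowerTail_length, show m - (m - 1) = 1 by omega,
    botGet_append_of_le_length _ (by simp)]
  rfl

lemma botGet_starL_add (h : IsTyped m T) (hr : residuum T m = 1) {j : ℕ} (hj : 1 ≤ j)
    (hjb : j ≤ T.b - T.a + 1) : botGet (starL T) (m + j) = T.b - T.a + 2 - j := by
  have := h.one_le
  rw [h.starL_eq hr, botGet_append_of_length_lt (by rw [h.lowerTail_length]; omega)
    (by simp [h.lowerTail_length]; omega), h.lowerTail_length,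
    show m + j - (m - 1) = j + 1 by omega,
    botGet_append_of_length_lt (by simp; omega) (by simp; omega), length_singleton,
    Nat.add_sub_cancel, botGet_range' hj hjb]

end IsTyped

section Pairs

variable {m p : ℕ} {T U : TwoCol}

lemma tailRoot_le_of_residuum_eq_one (hT : IsTyped m T) (hU : IsTyped p U)
    (hH : T.b ≤ U.b - U.a + 2 * residuum T m * residuum U p) (hrT : residuum T m = 1) :
    (tailOf T).getD 0 0 ≤ (tailOf U).getD 0 0 := by
  have := hT.two_le_a_of_residuum_eq_one hrT
  have := hU.a_le_b
  rw [hT.tailRoot_eq_of_residuum_eq_one hrT]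
  rcases hU.residuum_eq_zero_or_one with hrU | hrU
  · have := hU.b_lt_tailRoot_of_residuum_eq_zero hrU
    rw [hrU, Nat.mul_zero, Nat.add_zero] at hH
    omega
  · rw [hU.tailRoot_eq_of_residuum_eq_one hrU]
    rw [hrT, hrU] at hH
    omega

lemma tailOf_le_of_condA2pair (hT : IsTyped m T) (hU : IsTyped p U) (hpm : p ≤ m)
    (hH : T.b ≤ U.b - U.a + 2 * residuum T m * residuum U p) (hA2 : CondA2pair m p T U)
    {t : ℕ} (ht : t < p) : (tailOf T).getD t 0 ≤ (tailOf U).getD t 0 := by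
  have := hT.residuum_le_one
  rcases Nat.lt_or_ge t (residuum T m) with hlt | hge
  · obtain rfl : t = 0 := by omega
    exact tailRoot_le_of_residuum_eq_one hT hU hH (by omega)
  have hidx : p - t + m - p = m - t := by omega
  have hlen : p - t + m - p ≤ (hatR T).length := by rw [hT.hatR_length]; omega
  have hleft := hT.botGet_hatR_of_le (i := m - t) (by omega)
  rw [Nat.sub_sub_self (by omega)] at hleft
  by_cases h0 : residuum T m * residuum U p = 0
  · have := (hA2.1 h0 (p - t) (by omega) hlen).2
    rwa [hidx, hleft, hU.botGet_left_of_le (by omega), Nat.sub_sub_self (by omega)] at this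
  · have hrU : residuum U p = 1 := by
      rcases hU.residuum_eq_zero_or_one with h | h
      · simp [h] at h0
      · exact h
    have hrT : residuum T m = 1 := by rw [hrU, Nat.mul_one] at h0; omega
    have := (hA2.2 (by rw [hrT, hrU]) (p - t) (by omega) hlen).2
    rwa [hidx, hleft, hU.botGet_starL_of_lt hrU (by omega), Nat.sub_sub_self (by omega)] at this

lemma condA2pair_left_of_tailOf_le (hT : IsTyped m T) (hU : IsTyped p U) (hpm : p ≤ m)
    (hT2 : ∀ t < p, (tailOf T).getD t 0 ≤ (tailOf U).getD t 0) (hH : T.b ≤ U.b - U.a)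
    (hnot3 : Type1 m T ∨ Type2 m T) (hrU : residuum T m = 1 → residuum U p = 0) {i : ℕ}
    (hi : 1 ≤ i) (hlen : i + m - p ≤ (hatR T).length) :
    i ≤ U.left.length ∧ botGet (hatR T) (i + m - p) ≤ botGet U.left i := by
  have := hT.residuum_le_m
  have := hT.residuum_le_one
  rw [hT.hatR_length] at hlen
  refine ⟨by rw [hU.left_length]; omega, ?_⟩
  rcases le_or_gt (i + m - p) (m - residuum T m) with htail | hright
  · rw [hT.botGet_hatR_of_le htail, hU.botGet_left_of_le (by omega),
      show m - (i + m - p) = p - i by omega]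
    exact hT2 _ (by omega)
  · have hidx : i + m - p = m - residuum T m + (i + residuum T m - p) := by omega
    rw [hidx, hT.botGet_hatR_add (by omega) (by omega),
      hT.botGet_right_of_not_type3 hnot3 (by omega) (by omega)]
    rcases le_or_gt i p with hip | hip
    · have hrU0 := hrU (by omega)
      have := hU.b_lt_tailRoot_of_residuum_eq_zero hrU0
      rw [hU.botGet_left_of_le hip, show p - i = 0 by omega]
      omega
    · rw [show i = p + (i - p) by omega, hU.botGet_left_add (by omega) (by omega)]
      omega

lemma condA2pair_starL_of_tailOf_le (hT : IsTyped m T) (hU : IsTyped p U) (hpm : p ≤ m)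
    (hT2 : ∀ t < p, (tailOf T).getD t 0 ≤ (tailOf U).getD t 0) (hH : T.b ≤ U.b - U.a + 2)
    (hrT : residuum T m = 1) (hrU : residuum U p = 1) (hfin : finOf T ≤ finOf U) {i : ℕ}
    (hi : 1 ≤ i) (hlen : i + m - p ≤ (hatR T).length) :
    i ≤ (starL U).length ∧ botGet (hatR T) (i + m - p) ≤ botGet (starL U) i := by
  rw [hT.hatR_length, hrT] at hlen
  have := hT.one_le
  have := hT.two_le_a_of_residuum_eq_one hrT
  have := hU.a_le_b
  refine ⟨by rw [hU.starL_length hrU]; omega, ?_⟩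
  rcases lt_trichotomy i p with hip | rfl | hip
  · rw [hT.botGet_hatR_of_le (by omega), hU.botGet_starL_of_lt hrU hip,
      show m - (i + m - p) = i - i + (p - i) by omega, Nat.sub_self, Nat.zero_add]
    exact hT2 _ (by omega)
  · rw [show i + m - i = m - residuum T m + 1 by omega, hT.botGet_hatR_add le_rfl (by omega),
      hU.botGet_starL_self hrU]
    exact hfin
  · rw [show i + m - p = m - residuum T m + (i - p + 1) by omega,
      hT.botGet_hatR_add (by omega) (by omega), hT.botGet_right_of_two_le (by omega) (by omega),
      show i = p + (i - p) by omega, hU.botGet_starL_add hrU (by omega) (by omega)]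
    omega

theorem condA2pair_iff (hT : IsTyped m T) (hU : IsTyped p U) (hpm : p ≤ m)
    (hH : T.b ≤ U.b - U.a + 2 * residuum T m * residuum U p)
    (h3 : Type3 m T → residuum U p = 1 ∧ finOf T ≤ finOf U) :
    CondA2pair m p T U ↔ ∀ t < p, (tailOf T).getD t 0 ≤ (tailOf U).getD t 0 := by
  refine ⟨fun hA2 t ht => tailOf_le_of_condA2pair hT hU hpm hH hA2 ht, fun hT2 => ⟨?_, ?_⟩⟩
  · intro h0 i hi hlen
    have hnot3 : Type1 m T ∨ Type2 m T := by
      rcases hT.type with h1 | h2 | h3'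
      · exact Or.inl h1
      · exact Or.inr h2
      · rw [h3'.1, (h3 h3').1] at h0
        exact absurd h0 one_ne_zero
    rw [Nat.mul_assoc, h0, Nat.mul_zero, Nat.add_zero] at hH
    exact condA2pair_left_of_tailOf_le hT hU hpm hT2 hH hnot3
      (fun hrT => by rwa [hrT, Nat.one_mul] at h0) hi hlen
  · intro h1 i hi hlen
    have hrT := Nat.eq_one_of_mul_eq_one_right h1
    have hrU := Nat.eq_one_of_mul_eq_one_left h1
    rw [hrT, hrU] at hH
    have hfin : finOf T ≤ finOf U := by
      rcases hT.type with h1 | h2 | h3'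
      · exact absurd h1.1 (by omega)
      · have := hT.finOf_eq_b_of_not_type3 (Or.inr h2)
        have := hU.b_le_finOf
        have := hU.two_le_a_of_residuum_eq_one hrU
        have := hU.a_le_b
        omega
      · exact (h3 h3').2
    exact condA2pair_starL_of_tailOf_le hT hU hpm hT2 hH hrT hrU hfin hi hlen

end Pairs

lemma SL_eq_range' {c : ℕ} {S : RectCols} (hS : IsRect c S) (hc : 1 ≤ c)
    (hgaps : ∀ col ∈ S.cols, ∀ x, ¬ IsGapIn col x) : SL S = range' 1 (SL S).length := by
  have hmem : SL S ∈ S.cols := by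
    rw [SL, getD_eq_getElem _ _ (by rw [hS.1]; omega)]
    exact getElem_mem _
  exact eq_range'_of_forall_not_isGapIn (hS.2.1 _ hmem).1 (hS.2.1 _ hmem).2 (hgaps _ hmem)

section LastPair

variable {m : ℕ} {T : TwoCol} {S : RectCols}

lemma botGet_SL {i : ℕ} (hSL : SL S = range' 1 (SL S).length) (hi : 1 ≤ i)
    (hin : i ≤ (SL S).length) : botGet (SL S) i = (SL S).length + 1 - i := by
  rw [hSL, botGet_range' hi (by simpa using hin), length_range']

lemma IsTyped.botGet_hatR_self (hT : IsTyped m T) (hr : residuum T m = 0) :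
    botGet (hatR T) m = tailRoot T := by
  rw [← Nat.sub_zero m, ← hr, hT.botGet_hatR_of_le le_rfl, hr, Nat.sub_zero, Nat.sub_self,
    tailRoot_eq_getD_tailOf]

lemma condA2'pair_odd_of_tailRoot_le (hT : IsTyped m T) (hSL : SL S = range' 1 (SL S).length)
    (hH'odd : T.b ≤ (SL S).length - 1) (hodd : (SL S).length % 2 = 1)
    (hr : residuum T m = 0) (hroot : tailRoot T ≤ botGet (SL S) 1) {i : ℕ} (hi : 1 ≤ i)
    (hlen : i + m - 1 ≤ (hatR T).length) :
    i ≤ (SL S).length ∧ botGet (hatR T) (i + m - 1) ≤ botGet (SL S) i := by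
  have := hT.one_le
  rw [hT.hatR_length, hr] at hlen
  refine ⟨by omega, ?_⟩
  rcases Nat.lt_or_ge i 2 with hi1 | hi2
  · obtain rfl : i = 1 := by omega
    rwa [Nat.add_sub_cancel_left, hT.botGet_hatR_self hr]
  · rw [show i + m - 1 = m - residuum T m + (i - 1) by omega,
      hT.botGet_hatR_add (by omega) (by omega),
      hT.botGet_right_of_not_type3 (Or.inl (hT.type1_of_residuum_eq_zero hr)) (by omega)
        (by omega), botGet_SL hSL hi (by omega)]
    omega

lemma condA2'pair_of_not_odd (hT : IsTyped m T) (hSL : SL S = range' 1 (SL S).length)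
    (hH'even : SEven S → T.b ≤ (SL S).length)
    (hH'odd : ¬ SEven S → T.b ≤ (SL S).length - 1 + 2 * residuum T m)
    (hcase : ¬ (¬ SEven S ∧ residuum T m = 0)) {i : ℕ} (hi : 1 ≤ i)
    (hlen : i + m ≤ (hatR T).length) :
    i ≤ (SL S).length ∧ botGet (hatR T) (i + m) ≤ botGet (SL S) i := by
  have := hT.residuum_le_m
  rw [hT.hatR_length] at hlen
  have hidx : i + m = m - residuum T m + (i + residuum T m) := by omega
  rcases hT.residuum_eq_zero_or_one with hr | hr
  · have hbn := hH'even (by by_contra hodd; exact hcase ⟨hodd, hr⟩)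
    refine ⟨by omega, ?_⟩
    rw [hidx, hT.botGet_hatR_add (by omega) (by omega), hr, Nat.add_zero,
      hT.botGet_right_of_not_type3 (Or.inl (hT.type1_of_residuum_eq_zero hr)) hi (by omega),
      botGet_SL hSL hi (by omega)]
    omega
  · have hbn : T.b ≤ (SL S).length + 1 := by
      by_cases heven : SEven S
      · have := hH'even heven
        omega
      · have := hH'odd heven
        have : (SL S).length % 2 = 1 := by unfold SEven at heven; omega
        omega
    refine ⟨by omega, ?_⟩
    rw [hidx, hT.botGet_hatR_add (by omega) (by omega), hr,
      hT.botGet_right_of_two_le (by omega) (by omega), botGet_SL hSL hi (by omega)]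
    omega

theorem condA2'pair_iff (hT : IsTyped m T) (hSL : SL S = range' 1 (SL S).length)
    (hH'even : SEven S → T.b ≤ (SL S).length)
    (hH'odd : ¬ SEven S → T.b ≤ (SL S).length - 1 + 2 * residuum T m) :
    CondA2'pair m T S ↔ (Type1 m T → ¬ SEven S → tailRoot T ≤ botGet (SL S) 1) := by
  have := hT.one_le
  refine ⟨fun hA2' h1 hodd => ?_, fun hTR => ⟨fun ⟨hodd, hr⟩ i hi hlen => ?_,
    fun hcase i hi hlen => condA2'pair_of_not_odd hT hSL hH'even hH'odd hcase hi hlen⟩⟩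
  · have := (hA2'.1 ⟨hodd, h1.1⟩ 1 le_rfl (by rw [hT.hatR_length, h1.1]; omega)).2
    rwa [Nat.add_sub_cancel_left, hT.botGet_hatR_self h1.1] at this
  · have hbn := hH'odd hodd
    rw [hr, Nat.mul_zero, Nat.add_zero] at hbn
    exact condA2'pair_odd_of_tailRoot_le hT hSL hbn (by unfold SEven at hodd; omega) hr
      (hTR (hT.type1_of_residuum_eq_zero hr) hodd) hi hlen

end LastPair

lemma getD_succ_le_of_pairwise_ge {μ : List ℕ} (hμ : μ.Pairwise (· ≥ ·)) {i : ℕ}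
    (hi : i + 1 < μ.length) : μ.getD (i + 1) 0 ≤ μ.getD i 0 := by
  rw [List.getD_eq_getElem _ _ hi, List.getD_eq_getElem _ _ (by omega)]
  exact List.pairwise_iff_getElem.1 hμ i (i + 1) (by omega) hi (by omega)

end OrthoBij

open OrthoBij in
theorem statement12_general (k : ℕ) (μ : List ℕ)
    (hμ : IsPartitionL μ) (hμk : μ.length ≤ k)
    (d : KTupleData) (hd : IsKTuple k μ d)
    (hH : CondH μ d) (hH' : CondH' μ d) (hS : CondS d)
    (hT1 : CondT1noTR μ d) :
    ((∀ i, i + 1 < μ.length →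
        CondA2pair (μ.getD i 0) (μ.getD (i + 1) 0) (TAt d i) (TAt d (i + 1))) ∧
      (0 < μ.length →
        CondA2'pair (μ.getD (μ.length - 1) 0) (TAt d (μ.length - 1)) d.S)) ↔
    (CondT2 μ d ∧ CondT1TR μ d) := by
  obtain ⟨-, hvalid, hrect⟩ := hd
  have htyped : ∀ j < μ.length, IsTyped (μ.getD j 0) (TAt d j) := fun j hj =>
    ⟨hμ.2 _ (getD_mem_of_lt hj), hvalid j hj, hT1.1 j hj⟩
  have hpair : ∀ i, i + 1 < μ.length → _ := fun i hi =>
    condA2pair_iff (htyped i (by omega)) (htyped (i + 1) hi)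
      (getD_succ_le_of_pairwise_ge hμ.1 hi) (hH i hi) (hT1.2.1 i hi)
  have hlast : 0 < μ.length → _ := fun hl =>
    condA2'pair_iff (htyped _ (by omega)) (SL_eq_range' hrect (by omega) hS) (hH' hl).1
      (hH' hl).2
  constructor
  · rintro ⟨hA2, hA2'⟩
    refine ⟨fun i t hi ht => (hpair i hi).1 (hA2 i hi) t ?_, fun hl => (hlast hl).1 (hA2' hl)⟩
    rwa [(htyped _ hi).tailOf_length] at ht
  · rintro ⟨hT2, hTR⟩
    refine ⟨fun i hi => (hpair i hi).2 fun t ht => hT2 i t hi ?_, fun hl => (hlast hl).2 (hTR hl)⟩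
    rwa [(htyped _ hi).tailOf_length]

open OrthoBij in
/-- Let `L = (T₁, …, T_ℓ, S)` be a structurally valid tuple satisfying
(H), (H'), (S), (G) and (T1) with its tail-root clause omitted.  Then (A2) and (A2')
hold for all consecutive pairs of `L` if and only if both (T2) and the tail-root clause
of (T1) hold. -/
theorem statement12 (k : ℕ) (hk : 1 ≤ k) (μ : List ℕ)
    (hμ : IsPartitionL μ) (hμk : μ.length ≤ k)
    (d : KTupleData) (hd : IsKTuple k μ d)
    (hH : CondH μ d) (hH' : CondH' μ d) (hS : CondS d) (hG : CondG d)
    (hT1 : CondT1noTR μ d) :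
    ((∀ i, i + 1 < μ.length →
        CondA2pair (μ.getD i 0) (μ.getD (i + 1) 0) (TAt d i) (TAt d (i + 1))) ∧
      (0 < μ.length →
        CondA2'pair (μ.getD (μ.length - 1) 0) (TAt d (μ.length - 1)) d.S)) ↔
    (CondT2 μ d ∧ CondT1TR μ d) :=
  statement12_general k μ hμ hμk d hd hH hH' hS hT1
end

section
/- Let u = u_1⋯u_m be a word over the positive integers, with the sequences v_p of positions of u defined as in the context. Then u is a Yamanouchi word — that is, every initial segment of u contains, for every i ≥ 1, at least as many letters i as letters i+1 — if and only if every position p of u carrying the letter j belongs to exactly j of the sequences v_1,…,v_m. -/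
/-!
Read backwards, the construction of `v_m, v_{m-1}, …, v_1` is Schensted row insertion of
`u_m, u_{m-1}, …, u_1`: the sequence `v_p` lists the positions of the letters on the bumping path
of `u_p`, so that at every stage row `k` of the insertion tableau consists of the letters at the
positions lying in exactly `k` of the sequences built so far. Hence the condition on the `v_p`
says that the insertion tableau `P` of the reversed word is superstandard (row `k` is filled
with `k`). On the other side, `u` is Yamanouchi iff its reverse is a reverse lattice word. Being
a reverse lattice word is invariant under Knuth equivalence, and a word is Knuth equivalent to
the reading word of its insertion tableau, whose rows are increasing with row `k` having entries
`≥ k`; such a reading word is a reverse lattice word iff the tableau is superstandard.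
-/

namespace OrthoBij

/-- A word over the positive integers is Yamanouchi if every initial segment contains,
for every `i ≥ 1`, at least as many letters `i` as letters `i+1`. -/
def IsYamanouchi (u : List ℕ) : Prop :=
  ∀ s : List ℕ, s <+: u → ∀ i : ℕ, 1 ≤ i → s.count (i + 1) ≤ s.count i

/-- Greedy extension of the sequence `v_p` of positions of the word `u`: given the
previously defined sequences `prev` and the current last term `e` (term number `m - 1`),
term number `m` is obtained by taking, among the positions whose letter is strictly
larger than the letter of `e` and which belong to exactly `m - 1` of the sequences of
`prev`, those carrying the smallest letter, and among them the rightmost position. -/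
def extendSeqP (u : List ℕ) (prev : List (List ℕ)) : ℕ → ℕ → ℕ → List ℕ
  | 0, _, _ => []
  | fuel + 1, m, e =>
    let C := (List.range u.length).filter (fun q =>
      decide (u.getD e 0 < u.getD q 0) &&
      (prev.countP (fun sq => decide (q ∈ sq)) + 1 == m))
    match (C.map (fun q => u.getD q 0)).min? with
    | none => []
    | some lmin =>
      match (C.filter (fun q => u.getD q 0 == lmin)).max? with
      | none => []
      | some q => q :: extendSeqP u prev fuel (m + 1) q

/-- Build all sequences `v_p`, processing the positions of `order` in order and
accumulating the previously defined sequences. -/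
def seqsAuxP (u : List ℕ) : List ℕ → List (List ℕ) → List (List ℕ)
  | [], acc => acc
  | p :: rest, acc =>
      seqsAuxP u rest (acc ++ [p :: extendSeqP u acc (u.length + 1) 2 p])

/-- All the sequences `v_p` of the word `u = u₁ ⋯ u_m`, for `p = m, m-1, …, 1`. -/
def seqsP (u : List ℕ) : List (List ℕ) :=
  seqsAuxP u ((List.range u.length).reverse) []

end OrthoBij

namespace OrthoBij

/-! Lattice words and Knuth equivalence -/

def IsBalanced (t : List ℕ) : Prop := ∀ i, t.count (i + 2) ≤ t.count (i + 1)

def IsReverseLattice (w : List ℕ) : Prop := ∀ t, t <:+ w → IsBalanced t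

theorem isYamanouchi_iff_isReverseLattice_reverse (u : List ℕ) :
    IsYamanouchi u ↔ IsReverseLattice u.reverse := by
  constructor
  · intro h t ht i
    have := h t.reverse (by simpa using List.reverse_prefix.2 ht) (i + 1) (by omega)
    simpa [List.count_reverse] using this
  · intro h s hs i hi
    obtain ⟨j, rfl⟩ : ∃ j, i = j + 1 := ⟨i - 1, by omega⟩
    simpa [List.count_reverse] using h s.reverse (List.reverse_suffix.2 hs) j

theorem IsBalanced.of_perm {w w' : List ℕ} (h : w.Perm w') (hw : IsBalanced w) :
    IsBalanced w' := fun i => by simpa only [h.count_eq] using hw i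

theorem IsReverseLattice.isBalanced {w : List ℕ} (h : IsReverseLattice w) : IsBalanced w :=
  h w (List.suffix_refl w)

theorem isReverseLattice_cons_iff {a : ℕ} {w : List ℕ} :
    IsReverseLattice (a :: w) ↔ IsBalanced (a :: w) ∧ IsReverseLattice w := by
  simp only [IsReverseLattice, List.suffix_cons_iff, forall_eq_or_imp]

theorem isReverseLattice_append_iff_of_perm {v v' : List ℕ} (hperm : v.Perm v')
    (h : IsReverseLattice v ↔ IsReverseLattice v') :
    ∀ l : List ℕ, IsReverseLattice (l ++ v) ↔ IsReverseLattice (l ++ v')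
  | [] => h
  | c :: l => by
    simp only [List.cons_append, isReverseLattice_cons_iff,
      isReverseLattice_append_iff_of_perm hperm h l]
    exact and_congr_left fun _ =>
      ⟨.of_perm ((hperm.append_left l).cons c), .of_perm ((hperm.append_left l).cons c).symm⟩

inductive KnuthStep : List ℕ → List ℕ → Prop
  | knuth₁ (l r : List ℕ) {x y z : ℕ} (hxy : x ≤ y) (hyz : y < z) :
      KnuthStep (l ++ x :: z :: y :: r) (l ++ z :: x :: y :: r)
  | knuth₂ (l r : List ℕ) {x y z : ℕ} (hxy : x < y) (hyz : y ≤ z) :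
      KnuthStep (l ++ y :: x :: z :: r) (l ++ y :: z :: x :: r)

def KnuthEquiv : List ℕ → List ℕ → Prop := Relation.EqvGen KnuthStep

namespace KnuthEquiv

theorem refl (w : List ℕ) : KnuthEquiv w w := Relation.EqvGen.refl w

theorem symm {w w' : List ℕ} (h : KnuthEquiv w w') : KnuthEquiv w' w :=
  Relation.EqvGen.symm _ _ h

theorem trans {w w' w'' : List ℕ} (h : KnuthEquiv w w') (h' : KnuthEquiv w' w'') :
    KnuthEquiv w w'' :=
  Relation.EqvGen.trans _ _ _ h h'

theorem of_step {w w' : List ℕ} (h : KnuthStep w w') : KnuthEquiv w w' :=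
  Relation.EqvGen.rel _ _ h

theorem knuth₁ {x y z : ℕ} (r : List ℕ) (hxy : x ≤ y) (hyz : y < z) :
    KnuthEquiv (x :: z :: y :: r) (z :: x :: y :: r) :=
  of_step (KnuthStep.knuth₁ [] r hxy hyz)

theorem knuth₂ {x y z : ℕ} (r : List ℕ) (hxy : x < y) (hyz : y ≤ z) :
    KnuthEquiv (y :: x :: z :: r) (y :: z :: x :: r) :=
  of_step (KnuthStep.knuth₂ [] r hxy hyz)

theorem append {w w' : List ℕ} (h : KnuthEquiv w w') (l r : List ℕ) :
    KnuthEquiv (l ++ w ++ r) (l ++ w' ++ r) := by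
  induction h with
  | rel a b hab =>
    refine of_step ?_
    cases hab with
    | knuth₁ l' r' hxy hyz => simpa using KnuthStep.knuth₁ (l ++ l') (r' ++ r) hxy hyz
    | knuth₂ l' r' hxy hyz => simpa using KnuthStep.knuth₂ (l ++ l') (r' ++ r) hxy hyz
  | refl a => exact refl _
  | symm a b _ ih => exact ih.symm
  | trans a b c _ _ ih₁ ih₂ => exact ih₁.trans ih₂

theorem append_left {w w' : List ℕ} (h : KnuthEquiv w w') (l : List ℕ) :
    KnuthEquiv (l ++ w) (l ++ w') := by
  simpa using h.append l []

theorem append_right {w w' : List ℕ} (h : KnuthEquiv w w') (r : List ℕ) :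
    KnuthEquiv (w ++ r) (w' ++ r) := by
  simpa using h.append [] r

end KnuthEquiv

theorem isReverseLattice_knuth₁_iff {x y z : ℕ} {r : List ℕ} (hxy : x ≤ y) (hyz : y < z) :
    IsReverseLattice (x :: z :: y :: r) ↔ IsReverseLattice (z :: x :: y :: r) := by
  simp only [isReverseLattice_cons_iff]
  refine ⟨fun ⟨h₁, h₂, h₃, h₄⟩ => ⟨?_, ?_, h₃, h₄⟩, fun ⟨h₁, h₂, h₃, h₄⟩ => ⟨?_, ?_, h₃, h₄⟩⟩ <;>
  · intro i
    have := h₁ i; have := h₂ i; have := h₃ i; have := h₄.isBalanced i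
    simp only [List.count_cons, beq_iff_eq] at *
    split_ifs at * <;> omega

theorem isReverseLattice_knuth₂_iff {x y z : ℕ} {r : List ℕ} (hxy : x < y) (hyz : y ≤ z) :
    IsReverseLattice (y :: x :: z :: r) ↔ IsReverseLattice (y :: z :: x :: r) := by
  simp only [isReverseLattice_cons_iff]
  refine ⟨fun ⟨h₁, h₂, h₃, h₄⟩ => ⟨?_, ?_, ?_, h₄⟩, fun ⟨h₁, h₂, h₃, h₄⟩ => ⟨?_, ?_, ?_, h₄⟩⟩ <;>
  · intro i
    have := h₁ i; have := h₂ i; have := h₃ i; have := h₄.isBalanced i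
    simp only [List.count_cons, beq_iff_eq] at *
    split_ifs at * <;> omega

theorem KnuthEquiv.isReverseLattice_iff {w w' : List ℕ} (h : KnuthEquiv w w') :
    IsReverseLattice w ↔ IsReverseLattice w' := by
  induction h with
  | rel a b hab =>
    cases hab with
    | knuth₁ l r hxy hyz =>
      exact isReverseLattice_append_iff_of_perm (by simp [List.Perm.swap])
        (isReverseLattice_knuth₁_iff hxy hyz) l
    | knuth₂ l r hxy hyz =>
      exact isReverseLattice_append_iff_of_perm (by simp [List.Perm.swap])
        (isReverseLattice_knuth₂_iff hxy hyz) l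
  | refl a => exact Iff.rfl
  | symm a b _ ih => exact ih.symm
  | trans a b c _ _ ih₁ ih₂ => exact ih₁.trans ih₂


/-! Row insertion -/

def bumpRow (x : ℕ) : List ℕ → Option (ℕ × List ℕ)
  | [] => none
  | a :: R => if a ≤ x then (bumpRow x R).map fun p => (p.1, a :: p.2) else some (a, x :: R)

/-- Row insertion of `x` into a tableau given by its list of rows, top row first. -/
def rowInsert : List (List ℕ) → ℕ → List (List ℕ)
  | [], x => [[x]]
  | R :: P, x =>
    match bumpRow x R with
    | none => (R ++ [x]) :: P
    | some (y, R') => R' :: rowInsert P y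

/-- The letters inserted into the successive rows during `rowInsert P x`. -/
def bumpPath : List (List ℕ) → ℕ → List ℕ
  | [], x => [x]
  | R :: P, x =>
    match bumpRow x R with
    | none => [x]
    | some (y, _) => x :: bumpPath P y

def RowsSorted (P : List (List ℕ)) : Prop := ∀ R ∈ P, R.Pairwise (· ≤ ·)

def readingWord (P : List (List ℕ)) : List ℕ := P.reverse.flatten

theorem readingWord_cons (R : List ℕ) (P : List (List ℕ)) :
    readingWord (R :: P) = readingWord P ++ R := by
  simp [readingWord]

theorem readingWord_append (P Q : List (List ℕ)) :
    readingWord (P ++ Q) = readingWord Q ++ readingWord P := by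
  simp [readingWord]

theorem RowsSorted.getD {P : List (List ℕ)} (hP : RowsSorted P) (k : ℕ) :
    (P.getD k []).Pairwise (· ≤ ·) := by
  rw [List.getD_eq_getElem?_getD]
  cases h : P[k]? with
  | none => exact List.Pairwise.nil
  | some R => exact hP R (List.mem_of_getElem? h)

theorem bumpRow_eq_none_iff {x : ℕ} {R : List ℕ} : bumpRow x R = none ↔ ∀ a ∈ R, a ≤ x := by
  induction R with
  | nil => simp [bumpRow]
  | cons a R ih =>
    by_cases h : a ≤ x
    · simp [bumpRow, h, ih]
    · simp [bumpRow, h]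

theorem exists_of_bumpRow_eq_some {x y : ℕ} {R R' : List ℕ} (h : bumpRow x R = some (y, R')) :
    ∃ A B, R = A ++ y :: B ∧ R' = A ++ x :: B ∧ (∀ a ∈ A, a ≤ x) ∧ x < y := by
  induction R generalizing R' with
  | nil => simp [bumpRow] at h
  | cons a R ih =>
    by_cases ha : a ≤ x
    · simp only [bumpRow, if_pos ha, Option.map_eq_some_iff, Prod.exists, Prod.mk.injEq] at h
      obtain ⟨y', R'', hb, rfl, rfl⟩ := h
      obtain ⟨A, B, rfl, rfl, hA, hxy⟩ := ih hb
      exact ⟨a :: A, B, rfl, rfl, by simpa [ha] using hA, hxy⟩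
    · simp only [bumpRow, if_neg ha, Option.some.injEq, Prod.mk.injEq] at h
      obtain ⟨rfl, rfl⟩ := h
      exact ⟨[], R, rfl, rfl, by simp, by omega⟩

theorem bumpRow_fst_eq_min? {x : ℕ} {R : List ℕ} (hR : R.Pairwise (· ≤ ·)) :
    (bumpRow x R).map Prod.fst = (R.filter (x < ·)).min? := by
  induction R with
  | nil => rfl
  | cons a R ih =>
    rw [List.pairwise_cons] at hR
    by_cases ha : a ≤ x
    · simp [bumpRow, ha, ← ih hR.2, Option.map_map, Function.comp_def]
    · have : (a :: R.filter (x < ·)).min? = some a :=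
        List.min?_eq_some_iff.2 ⟨by simp, by simp +contextual [hR.1]⟩
      simp [bumpRow, ha, show x < a by omega, this]

theorem count_of_bumpRow_eq_some {x y : ℕ} {R R' : List ℕ} (h : bumpRow x R = some (y, R')) (a : ℕ) :
    R'.count a + (if y = a then 1 else 0) = R.count a + (if x = a then 1 else 0) := by
  obtain ⟨A, B, rfl, rfl, -, -⟩ := exists_of_bumpRow_eq_some h
  simp only [List.count_append, List.count_cons, beq_iff_eq]
  split_ifs <;> omega

theorem lt_of_bumpRow_eq_some {x y : ℕ} {R R' : List ℕ} (h : bumpRow x R = some (y, R')) :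
    x < y := by
  obtain ⟨-, -, -, -, -, hxy⟩ := exists_of_bumpRow_eq_some h
  exact hxy

theorem pairwise_of_bumpRow_eq_some {x y : ℕ} {R R' : List ℕ} (hR : R.Pairwise (· ≤ ·))
    (h : bumpRow x R = some (y, R')) : R'.Pairwise (· ≤ ·) := by
  obtain ⟨A, B, rfl, rfl, hA, hxy⟩ := exists_of_bumpRow_eq_some h
  simp only [List.pairwise_append, List.pairwise_cons, List.mem_cons] at hR ⊢
  refine ⟨hR.1, ⟨fun b hb => hxy.le.trans (hR.2.1.1 b hb), hR.2.1.2⟩, ?_⟩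
  rintro a ha b (rfl | hb)
  · exact hA a ha
  · exact hR.2.2 a ha b (Or.inr hb)

theorem mem_of_bumpRow_eq_some {x y : ℕ} {R R' : List ℕ} (h : bumpRow x R = some (y, R')) :
    ∀ a ∈ R', a = x ∨ a ∈ R := by
  obtain ⟨A, B, rfl, rfl, -, -⟩ := exists_of_bumpRow_eq_some h
  intro a
  simp only [List.mem_append, List.mem_cons]
  tauto

theorem bumpPath_eq_cons (P : List (List ℕ)) (x : ℕ) : ∃ t, bumpPath P x = x :: t := by
  cases P with
  | nil => exact ⟨[], rfl⟩
  | cons R P =>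
    cases h : bumpRow x R with
    | none => exact ⟨[], by simp [bumpPath, h]⟩
    | some p => exact ⟨bumpPath P p.1, by simp [bumpPath, h]⟩

theorem bumpPath_eq_match (T : List (List ℕ)) (x : ℕ) :
    bumpPath T x = match bumpRow x (T.getD 0 []) with
      | none => [x]
      | some (y, _) => x :: bumpPath T.tail y := by
  cases T <;> rfl

theorem bumpPath_getElem?_succ {P : List (List ℕ)} {x : ℕ} {k d : ℕ}
    (h : (bumpPath P x)[k + 1]? = some d) : ∃ c, (bumpPath P x)[k]? = some c ∧ c < d := by
  induction P generalizing x k with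
  | nil => simp [bumpPath] at h
  | cons R P ih =>
    cases hb : bumpRow x R with
    | none => simp [bumpPath, hb] at h
    | some p =>
      simp only [bumpPath, hb, List.getElem?_cons_succ] at h ⊢
      cases k with
      | zero =>
        obtain ⟨t, ht⟩ := bumpPath_eq_cons P p.1
        simp only [ht, List.getElem?_cons_zero, Option.some.injEq] at h
        exact ⟨x, rfl, h ▸ lt_of_bumpRow_eq_some hb⟩
      | succ k => exact ih h

theorem le_of_bumpPath_getElem? {P : List (List ℕ)} {x : ℕ} :
    ∀ {d y}, (bumpPath P x)[d]? = some y → x + d ≤ y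
  | 0, y, h => by
    obtain ⟨t, ht⟩ := bumpPath_eq_cons P x
    simp_all
  | d + 1, y, h => by
    obtain ⟨c, hc, hcy⟩ := bumpPath_getElem?_succ h
    have := le_of_bumpPath_getElem? hc
    omega

theorem count_rowInsert_getD (P : List (List ℕ)) (x k a : ℕ) :
    ((rowInsert P x).getD k []).count a + (if (bumpPath P x)[k + 1]? = some a then 1 else 0)
      = (P.getD k []).count a + (if (bumpPath P x)[k]? = some a then 1 else 0) := by
  induction P generalizing x k with
  | nil => cases k <;> simp [rowInsert, bumpPath, List.count_cons]
  | cons R P ih =>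
    cases hb : bumpRow x R with
    | none => cases k <;> simp [rowInsert, bumpPath, hb, List.count_append, List.count_cons]
    | some p =>
      cases k with
      | zero =>
        obtain ⟨t, ht⟩ := bumpPath_eq_cons P p.1
        simpa [rowInsert, bumpPath, hb, ht] using count_of_bumpRow_eq_some hb a
      | succ k => simpa [rowInsert, bumpPath, hb] using ih p.1 k

theorem mem_rowInsert_getD (P : List (List ℕ)) (x k : ℕ) :
    ∀ a ∈ (rowInsert P x).getD k [], a ∈ P.getD k [] ∨ (bumpPath P x)[k]? = some a := by
  induction P generalizing x k with
  | nil => cases k <;> simp [rowInsert, bumpPath]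
  | cons R P ih =>
    intro a ha
    cases hb : bumpRow x R with
    | none =>
      cases k with
      | zero =>
        simp only [rowInsert, hb, List.getD_cons_zero, List.mem_append, List.mem_singleton] at ha
        simpa [bumpPath, hb, eq_comm] using ha
      | succ k => simp_all [rowInsert, bumpPath]
    | some p =>
      cases k with
      | zero =>
        simp only [rowInsert, hb, List.getD_cons_zero] at ha
        simpa [bumpPath, hb, or_comm, eq_comm] using mem_of_bumpRow_eq_some hb a ha
      | succ k =>
        simpa [rowInsert, bumpPath, hb] using ih p.1 k a (by simpa [rowInsert, hb] using ha)

theorem RowsSorted.rowInsert {P : List (List ℕ)} (hP : RowsSorted P) (x : ℕ) :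
    RowsSorted (rowInsert P x) := by
  induction P generalizing x with
  | nil => simp [RowsSorted, OrthoBij.rowInsert]
  | cons R P ih =>
    have hR := hP R (by simp)
    have hP' : RowsSorted P := fun S hS => hP S (by simp [hS])
    cases hb : bumpRow x R with
    | none =>
      simp only [RowsSorted, OrthoBij.rowInsert, hb, List.mem_cons, forall_eq_or_imp]
      refine ⟨List.pairwise_append.2 ⟨hR, by simp, ?_⟩, hP'⟩
      simpa using bumpRow_eq_none_iff.1 hb
    | some p =>
      simp only [RowsSorted, OrthoBij.rowInsert, hb, List.mem_cons, forall_eq_or_imp]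
      exact ⟨pairwise_of_bumpRow_eq_some hR hb, ih hP' p.1⟩

theorem length_rowInsert_le (P : List (List ℕ)) (x : ℕ) :
    (rowInsert P x).length ≤ P.length + 1 := by
  induction P generalizing x with
  | nil => simp [rowInsert]
  | cons R P ih =>
    cases hb : bumpRow x R with
    | none => simp [rowInsert, hb]
    | some p => simpa [rowInsert, hb] using ih p.1

theorem knuthEquiv_cons_append_singleton : ∀ (B : List ℕ) {c x : ℕ}, (∀ b ∈ B, c ≤ b) →
    B.Pairwise (· ≤ ·) → x < c → KnuthEquiv (c :: (B ++ [x])) (c :: x :: B)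
  | [], _, _, _, _, _ => KnuthEquiv.refl _
  | b :: B, c, x, hcB, hB, hxc => by
    rw [List.pairwise_cons] at hB
    have hcb : c ≤ b := hcB b (by simp)
    have ih := knuthEquiv_cons_append_singleton B hB.1 hB.2 (hxc.trans_le hcb)
    exact (ih.append_left [c]).trans (KnuthEquiv.knuth₂ B hxc hcb).symm

theorem knuthEquiv_append_cons_cons : ∀ (A : List ℕ) {x y : ℕ} (B : List ℕ), (∀ a ∈ A, a ≤ x) →
    A.Pairwise (· ≤ ·) → x < y → KnuthEquiv (A ++ y :: x :: B) (y :: (A ++ x :: B))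
  | [], _, _, _, _, _, _ => KnuthEquiv.refl _
  | a :: A, x, y, B, hAx, hA, hxy => by
    rw [List.pairwise_cons] at hA
    have ih := knuthEquiv_append_cons_cons A B (fun a' ha' => hAx a' (by simp [ha'])) hA.2 hxy
    refine (ih.append_left [a]).trans ?_
    have hax : a ≤ x := hAx a (by simp)
    cases A with
    | nil => exact KnuthEquiv.knuth₁ B hax hxy
    | cons a' A =>
      exact KnuthEquiv.knuth₁ (A ++ x :: B) (hA.1 a' (by simp))
        ((hAx a' (by simp)).trans_lt hxy)

theorem KnuthEquiv.of_bumpRow_eq_some {x y : ℕ} {R R' : List ℕ} (hR : R.Pairwise (· ≤ ·))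
    (h : bumpRow x R = some (y, R')) : KnuthEquiv (R ++ [x]) (y :: R') := by
  obtain ⟨A, B, rfl, rfl, hA, hxy⟩ := exists_of_bumpRow_eq_some h
  simp only [List.pairwise_append, List.pairwise_cons] at hR
  have h₁ := (knuthEquiv_cons_append_singleton B hR.2.1.1 hR.2.1.2 hxy).append_left A
  simpa using h₁.trans (knuthEquiv_append_cons_cons A B hA hR.1 hxy)

theorem knuthEquiv_readingWord_rowInsert {P : List (List ℕ)} (hP : RowsSorted P) (x : ℕ) :
    KnuthEquiv (readingWord P ++ [x]) (readingWord (rowInsert P x)) := by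
  induction P generalizing x with
  | nil => exact KnuthEquiv.refl _
  | cons R P ih =>
    have hP' : RowsSorted P := fun S hS => hP S (by simp [hS])
    cases hb : bumpRow x R with
    | none => simpa [rowInsert, hb, readingWord_cons] using KnuthEquiv.refl _
    | some p =>
      simp only [rowInsert, hb, readingWord_cons]
      have h₁ := (KnuthEquiv.of_bumpRow_eq_some (hP R (by simp)) hb).append_left (readingWord P)
      have h₂ := (ih hP' p.1).append_right p.2
      simpa using h₁.trans (by simpa using h₂)

/-! The insertion tableau -/

def insertionTableau (w : List ℕ) : List (List ℕ) := w.foldl rowInsert []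

theorem insertionTableau_append_singleton (w : List ℕ) (x : ℕ) :
    insertionTableau (w ++ [x]) = rowInsert (insertionTableau w) x := by
  simp [insertionTableau]

theorem rowsSorted_insertionTableau (w : List ℕ) : RowsSorted (insertionTableau w) := by
  induction w using List.reverseRecOn with
  | nil => simp [RowsSorted, insertionTableau]
  | append_singleton w x ih => simpa [insertionTableau_append_singleton] using ih.rowInsert x

theorem knuthEquiv_readingWord_insertionTableau (w : List ℕ) :
    KnuthEquiv w (readingWord (insertionTableau w)) := by
  induction w using List.reverseRecOn with
  | nil => exact KnuthEquiv.refl []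
  | append_singleton w x ih =>
    rw [insertionTableau_append_singleton]
    exact (ih.append_right [x]).trans
      (knuthEquiv_readingWord_rowInsert (rowsSorted_insertionTableau w) x)

theorem le_of_mem_insertionTableau {w : List ℕ} (hw : ∀ x ∈ w, 1 ≤ x) {k a : ℕ}
    (ha : a ∈ (insertionTableau w).getD k []) : k + 1 ≤ a := by
  induction w using List.reverseRecOn generalizing k a with
  | nil => simp [insertionTableau] at ha
  | append_singleton w x ih =>
    rw [insertionTableau_append_singleton] at ha
    rcases mem_rowInsert_getD _ x k a ha with h | h
    · exact ih (fun y hy => hw y (by simp [hy])) h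
    · have := le_of_bumpPath_getElem? h
      have := hw x (by simp)
      omega

/-- The `d`-th letter of a bumping path is at least `d + 1` and the path increases strictly: so a
letter `k + 1` is never bumped out of row `k`, and a letter `k + 2` enters row `k + 1` only
together with a letter `k + 1` entering row `k`. -/
theorem count_insertionTableau_getD_succ_le {w : List ℕ} (hw : ∀ x ∈ w, 1 ≤ x) (k : ℕ) :
    ((insertionTableau w).getD (k + 1) []).count (k + 2)
      ≤ ((insertionTableau w).getD k []).count (k + 1) := by
  induction w using List.reverseRecOn with
  | nil => simp [insertionTableau]
  | append_singleton w x ih =>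
    have ih := ih (fun y hy => hw y (by simp [hy]))
    have hx := hw x (by simp)
    rw [insertionTableau_append_singleton]
    set path := bumpPath (insertionTableau w) x
    have e₁ := count_rowInsert_getD (insertionTableau w) x k (k + 1)
    have e₂ := count_rowInsert_getD (insertionTableau w) x (k + 1) (k + 2)
    have h₁ : path[k + 1]? ≠ some (k + 1) := fun h => by
      have := le_of_bumpPath_getElem? h; omega
    have h₂ : path[k + 2]? ≠ some (k + 2) := fun h => by
      have := le_of_bumpPath_getElem? h; omega
    rw [if_neg h₁] at e₁
    rw [if_neg h₂] at e₂
    by_cases hs : path[k + 1]? = some (k + 2)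
    · obtain ⟨c, hc, hck⟩ := bumpPath_getElem?_succ hs
      have := le_of_bumpPath_getElem? hc
      obtain rfl : c = k + 1 := by omega
      rw [if_pos hs] at e₂
      rw [if_pos hc] at e₁
      omega
    · rw [if_neg hs] at e₂
      split_ifs at e₁ <;> omega

/-! Superstandard tableaux -/

def IsSuperstandard (P : List (List ℕ)) : Prop := ∀ k, ∀ a ∈ P.getD k [], a = k + 1

theorem suffix_append_cases {t X R : List ℕ} (h : t <:+ X ++ R) :
    t <:+ R ∨ ∃ s, s <:+ X ∧ t = s ++ R := by
  rw [← List.mem_tails, List.tails_append, List.mem_append, List.mem_map] at h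
  rcases h with ⟨s, hs, rfl⟩ | h
  · exact Or.inr ⟨s, (List.mem_tails _ _).1 hs, rfl⟩
  · exact Or.inl ((List.mem_tails _ _).1 (List.mem_of_mem_tail h))

theorem readingWord_take_succ (P : List (List ℕ)) (k : ℕ) :
    readingWord (P.take (k + 1)) = P.getD k [] ++ readingWord (P.take k) := by
  rw [List.take_add_one, readingWord_append, List.getD_eq_getElem?_getD]
  cases P[k]? <;> simp [readingWord]

theorem exists_of_suffix_readingWord {P : List (List ℕ)} {t : List ℕ}
    (h : t <:+ readingWord P) :
    ∃ k t', t' <:+ P.getD k [] ∧ t = t' ++ readingWord (P.take k) := by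
  induction P generalizing t with
  | nil => exact ⟨0, t, by simpa [readingWord] using h, by simp [readingWord]⟩
  | cons R P ih =>
    rw [readingWord_cons] at h
    rcases suffix_append_cases h with h | ⟨s, hs, rfl⟩
    · exact ⟨0, t, by simpa using h, by simp [readingWord]⟩
    · obtain ⟨k, t', ht', rfl⟩ := ih hs
      exact ⟨k + 1, t', by simpa using ht', by simp [readingWord_cons]⟩

theorem exists_of_mem_readingWord_take {P : List (List ℕ)} {k a : ℕ}
    (h : a ∈ readingWord (P.take k)) : ∃ j < k, a ∈ P.getD j [] := by
  induction k with
  | zero => simp [readingWord] at h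
  | succ k ih =>
    rw [readingWord_take_succ, List.mem_append] at h
    rcases h with h | h
    · exact ⟨k, by omega, h⟩
    · obtain ⟨j, hj, h⟩ := ih h
      exact ⟨j, by omega, h⟩

theorem IsSuperstandard.count_getD {P : List (List ℕ)} (hP : IsSuperstandard P) (k j : ℕ) :
    (P.getD k []).count (j + 1) = if k = j then (P.getD k []).length else 0 := by
  split_ifs with h
  · exact List.count_eq_length.2 fun a ha => by rw [hP k a ha, h]
  · exact List.count_eq_zero.2 fun ha => h (by have := hP k _ ha; omega)

theorem IsSuperstandard.count_readingWord_take {P : List (List ℕ)} (hP : IsSuperstandard P)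
    (k j : ℕ) :
    (readingWord (P.take k)).count (j + 1) = if j < k then (P.getD j []).length else 0 := by
  induction k with
  | zero => simp [readingWord]
  | succ k ih =>
    rw [readingWord_take_succ, List.count_append, ih, hP.count_getD]
    by_cases hjk : j = k
    · subst hjk; simp
    · simp only [if_neg (Ne.symm hjk)]
      split_ifs <;> omega

/-- A letter `a ≥ k + 2` in row `k` would start a suffix `a ⋯` of the reading word in which
no letter `a - 1` occurs: the rest of row `k` is at least `a`, and the rows above are
`1, …, k` by induction. -/
theorem IsReverseLattice.isSuperstandard {P : List (List ℕ)} (hP : RowsSorted P)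
    (hle : ∀ k, ∀ a ∈ P.getD k [], k + 1 ≤ a) (hlat : IsReverseLattice (readingWord P)) :
    IsSuperstandard P := by
  intro k
  induction k using Nat.strong_induction_on with
  | _ k ih =>
    intro a ha
    by_contra hne
    have hak : k + 2 ≤ a := by have := hle k a ha; omega
    obtain ⟨A, B, hAB⟩ := List.append_of_mem ha
    have hB : ∀ b ∈ B, a ≤ b := by
      have := hP.getD k
      rw [hAB, List.pairwise_append, List.pairwise_cons] at this
      exact this.2.1.1
    have hsuf : a :: B ++ readingWord (P.take k) <:+ readingWord P := by
      rw [← List.take_append_drop (k + 1) P, readingWord_append, readingWord_take_succ, hAB]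
      exact ⟨readingWord (P.drop (k + 1)) ++ A, by simp⟩
    have hbal := hlat _ hsuf (a - 2)
    rw [show a - 2 + 2 = a by omega, show a - 2 + 1 = a - 1 by omega] at hbal
    have hnot : a - 1 ∉ a :: B ++ readingWord (P.take k) := by
      simp only [List.cons_append, List.mem_cons, List.mem_append, not_or]
      refine ⟨by omega, fun hb => by have := hB _ hb; omega, fun hb => ?_⟩
      obtain ⟨j, hj, hb⟩ := exists_of_mem_readingWord_take hb
      have := ih j hj _ hb
      omega
    rw [List.count_eq_zero.2 hnot, List.cons_append, List.count_cons_self] at hbal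
    omega

theorem IsSuperstandard.isReverseLattice {P : List (List ℕ)} (hP : IsSuperstandard P)
    (hlen : ∀ k, (P.getD (k + 1) []).length ≤ (P.getD k []).length) :
    IsReverseLattice (readingWord P) := by
  intro t ht i
  obtain ⟨k, t', ht', rfl⟩ := exists_of_suffix_readingWord ht
  have hrep : t' = List.replicate t'.length (k + 1) :=
    List.eq_replicate_iff.2 ⟨rfl, fun a ha => hP k a (ht'.subset ha)⟩
  have e₁ : (readingWord (P.take k)).count (i + 2)
      = if i + 1 < k then (P.getD (i + 1) []).length else 0 :=
    hP.count_readingWord_take k (i + 1)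
  have e₂ := hP.count_readingWord_take k i
  have := ht'.length_le
  have := hlen i
  rw [List.count_append, List.count_append, e₁, e₂, hrep, List.count_replicate,
    List.count_replicate]
  simp only [beq_iff_eq]
  rcases eq_or_ne k (i + 1) with rfl | hk <;> split_ifs <;> omega

theorem isReverseLattice_iff_isSuperstandard_insertionTableau {w : List ℕ}
    (hw : ∀ x ∈ w, 1 ≤ x) : IsReverseLattice w ↔ IsSuperstandard (insertionTableau w) := by
  rw [(knuthEquiv_readingWord_insertionTableau w).isReverseLattice_iff]
  refine ⟨IsReverseLattice.isSuperstandard (rowsSorted_insertionTableau w)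
    (fun _ _ => le_of_mem_insertionTableau hw), fun hP => hP.isReverseLattice fun k => ?_⟩
  have h := count_insertionTableau_getD_succ_le hw k
  have e₁ := hP.count_getD (k + 1) (k + 1)
  have e₂ := hP.count_getD k k
  simp only [if_true] at e₁ e₂
  rwa [e₁, e₂] at h

/-! The sequences `v_p` and the bumping paths -/

def numContaining (seqs : List (List ℕ)) (q : ℕ) : ℕ := seqs.countP fun s => decide (q ∈ s)

theorem numContaining_append_singleton (seqs : List (List ℕ)) (s : List ℕ) (q : ℕ) :
    numContaining (seqs ++ [s]) q = numContaining seqs q + if q ∈ s then 1 else 0 := by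
  simp only [numContaining, List.countP_append, List.countP_singleton, decide_eq_true_eq]

section Word

variable (u : List ℕ)

def levelCount (g : ℕ → ℕ) (k a : ℕ) : ℕ :=
  ((Finset.range u.length).filter fun q => g q = k + 1 ∧ u.getD q 0 = a).card

variable {u}

theorem levelCount_pos_iff {g : ℕ → ℕ} {k a : ℕ} :
    0 < levelCount u g k a ↔ ∃ q < u.length, g q = k + 1 ∧ u.getD q 0 = a := by
  simp [levelCount, Finset.card_pos, Finset.filter_nonempty_iff]

theorem mem_iff_of_count_eq_levelCount {g : ℕ → ℕ} {R : List ℕ} {k : ℕ}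
    (h : ∀ a, R.count a = levelCount u g k a) (a : ℕ) :
    a ∈ R ↔ ∃ q < u.length, g q = k + 1 ∧ u.getD q 0 = a := by
  rw [← List.count_pos_iff, h, levelCount_pos_iff]

variable (u)

def candidates (acc : List (List ℕ)) (m e : ℕ) : List ℕ :=
  (List.range u.length).filter fun q =>
    decide (u.getD e 0 < u.getD q 0) && (acc.countP (fun sq => decide (q ∈ sq)) + 1 == m)

theorem extendSeqP_succ (acc : List (List ℕ)) (fuel m e : ℕ) :
    extendSeqP u acc (fuel + 1) m e =
      match ((candidates u acc m e).map (u.getD · 0)).min? with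
      | none => []
      | some b =>
        match ((candidates u acc m e).filter (u.getD · 0 == b)).max? with
        | none => []
        | some q => q :: extendSeqP u acc fuel (m + 1) q :=
  rfl

variable {u}

theorem mem_candidates {acc : List (List ℕ)} {m e q : ℕ} :
    q ∈ candidates u acc m e ↔
      q < u.length ∧ u.getD e 0 < u.getD q 0 ∧ numContaining acc q + 1 = m := by
  simp [candidates, numContaining]

theorem min?_candidates {acc : List (List ℕ)} {R : List ℕ} {t : ℕ}
    (hR : R.Pairwise (· ≤ ·)) (hrow : ∀ a, R.count a = levelCount u (numContaining acc) t a)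
    (e : ℕ) :
    ((candidates u acc (t + 2) e).map (u.getD · 0)).min?
      = (bumpRow (u.getD e 0) R).map Prod.fst := by
  rw [bumpRow_fst_eq_min? hR]
  refine Option.ext fun b => ?_
  simp only [List.min?_eq_some_iff, List.mem_map, List.mem_filter, mem_candidates,
    mem_iff_of_count_eq_levelCount hrow, decide_eq_true_eq]
  grind

theorem exists_extendSeqP_succ_eq_cons {acc : List (List ℕ)} {m e b : ℕ} (fuel : ℕ)
    (h : ((candidates u acc m e).map (u.getD · 0)).min? = some b) :
    ∃ q ∈ candidates u acc m e, u.getD q 0 = b ∧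
      extendSeqP u acc (fuel + 1) m e = q :: extendSeqP u acc fuel (m + 1) q := by
  rw [extendSeqP_succ, h]
  dsimp only
  cases hmax : ((candidates u acc m e).filter (u.getD · 0 == b)).max? with
  | none =>
    obtain ⟨q, hq, hqb⟩ := List.mem_map.1 (List.min?_mem h)
    exact absurd (List.max?_eq_none_iff.1 hmax)
      (List.ne_nil_of_mem (List.mem_filter.2 ⟨hq, by simpa using hqb⟩))
  | some q =>
    obtain ⟨hqC, hqb⟩ := List.mem_filter.1 (List.max?_mem hmax)
    exact ⟨q, hqC, by simpa using hqb, rfl⟩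

theorem extendSeqP_follows_bumpPath {acc T : List (List ℕ)} {t : ℕ} (hT : RowsSorted T)
    (hrows : ∀ k a, (T.getD k []).count a = levelCount u (numContaining acc) (t + k) a)
    {fuel : ℕ} (hfuel : T.length ≤ fuel) (e : ℕ) :
    (e :: extendSeqP u acc fuel (t + 2) e).map (u.getD · 0) = bumpPath T (u.getD e 0) ∧
      (extendSeqP u acc fuel (t + 2) e).map (numContaining acc)
        = List.range' (t + 1) (extendSeqP u acc fuel (t + 2) e).length ∧
      ∀ q ∈ extendSeqP u acc fuel (t + 2) e, q < u.length := by
  induction fuel generalizing T t e with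
  | zero =>
    obtain rfl : T = [] := List.eq_nil_of_length_eq_zero (by omega)
    simp [extendSeqP, bumpPath]
  | succ fuel ih =>
    have hmin := min?_candidates (hT.getD 0) (fun a => by simpa using hrows 0 a) e
    rw [bumpPath_eq_match]
    cases hb : bumpRow (u.getD e 0) (T.getD 0 []) with
    | none =>
      rw [hb, Option.map_none] at hmin
      rw [extendSeqP_succ, hmin]
      simp
    | some p =>
      obtain ⟨b, R'⟩ := p
      rw [hb, Option.map_some] at hmin
      obtain ⟨q, hqC, rfl, hext⟩ := exists_extendSeqP_succ_eq_cons fuel hmin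
      obtain ⟨hqn, -, hqacc⟩ := mem_candidates.1 hqC
      have hrows' : ∀ k a, (T.tail.getD k []).count a
          = levelCount u (numContaining acc) (t + 1 + k) a := fun k a => by
        simpa [List.getD_eq_getElem?_getD, Nat.add_right_comm, Nat.add_assoc] using hrows (k + 1) a
      obtain ⟨ih₁, ih₂, ih₃⟩ :=
        ih (fun R hR => hT R (List.mem_of_mem_tail hR)) hrows' (by simp; omega) q
      rw [show t + 1 + 2 = t + 2 + 1 by omega] at ih₁ ih₂ ih₃
      rw [hext]
      refine ⟨by simpa using ih₁, ?_, ?_⟩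
      · simp [ih₂, List.range'_succ, show numContaining acc q = t + 1 by omega]
      · simpa [hqn] using ih₃

theorem getElem?_eq_some_iff_of_map_eq_range' {g : ℕ → ℕ} {seq : List ℕ}
    (hseq : seq.map g = List.range' 0 seq.length) {j q : ℕ} :
    seq[j]? = some q ↔ q ∈ seq ∧ g q = j := by
  have hg : ∀ i (hi : i < seq.length), g seq[i] = i := fun i hi => by
    simpa [hi] using congrArg (·[i]?) hseq
  constructor
  · intro h
    obtain ⟨hj, rfl⟩ := List.getElem?_eq_some_iff.1 h
    exact ⟨List.getElem_mem hj, hg j hj⟩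
  · rintro ⟨hq, rfl⟩
    obtain ⟨i, hi, rfl⟩ := List.getElem_of_mem hq
    rw [hg i hi]
    exact List.getElem?_eq_getElem hi

theorem ite_getElem?_map_eq_card {seq : List ℕ} (hlt : ∀ q ∈ seq, q < u.length) (j a : ℕ) :
    (if (seq.map (u.getD · 0))[j]? = some a then 1 else 0)
      = ((Finset.range u.length).filter fun q => seq[j]? = some q ∧ u.getD q 0 = a).card := by
  rw [List.getElem?_map]
  cases h : seq[j]? with
  | none => simp
  | some q =>
    have hq : q < u.length := hlt q (List.mem_of_getElem? h)
    rw [Finset.card_filter, Finset.sum_eq_single q]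
    · simp
    · simp +contextual [eq_comm]
    · simp [hq]

theorem levelCount_add_ite {g : ℕ → ℕ} {seq : List ℕ}
    (hseq : seq.map g = List.range' 0 seq.length) (hlt : ∀ q ∈ seq, q < u.length) (k a : ℕ) :
    levelCount u (fun q => g q + if q ∈ seq then 1 else 0) k a
        + (if (seq.map (u.getD · 0))[k + 1]? = some a then 1 else 0)
      = levelCount u g k a + (if (seq.map (u.getD · 0))[k]? = some a then 1 else 0) := by
  simp only [levelCount, ite_getElem?_map_eq_card hlt, Finset.card_filter,
    ← Finset.sum_add_distrib, getElem?_eq_some_iff_of_map_eq_range' hseq]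
  refine Finset.sum_congr rfl fun q _ => ?_
  by_cases hq : q ∈ seq <;> simp only [hq, if_true, if_false, true_and, false_and] <;>
    split_ifs <;> omega

theorem pos_numContaining_append_iff {seqs : List (List ℕ)} {ext : List ℕ} {p N : ℕ}
    (h : ∀ q < N, 0 < numContaining seqs q ↔ p + 1 ≤ q) (hext : ∀ q ∈ ext, p < q) :
    ∀ q < N, 0 < numContaining (seqs ++ [p :: ext]) q ↔ p ≤ q := by
  intro q hq
  have hiff := h q hq
  rw [numContaining_append_singleton]
  by_cases hmem : q ∈ p :: ext
  · have : p ≤ q := by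
      rcases List.mem_cons.1 hmem with rfl | hm
      exacts [le_rfl, (hext q hm).le]
    simp [hmem, this]
  · have : q ≠ p := fun hqp => hmem (hqp ▸ List.mem_cons_self)
    simp only [hmem, if_false, add_zero, hiff]
    omega

variable (u)

/-- Row `k` of `S` holds exactly the letters at the positions lying in `k + 1` of the sequences
`seqs = v_{n-1}, …, v_p` (positions counted from `0`); along the construction, `S` is the insertion
tableau of `u_{n-1} ⋯ u_p`. -/
structure InsertionInvariant (p : ℕ) (seqs S : List (List ℕ)) : Prop where
  pos_iff : ∀ q < u.length, 0 < numContaining seqs q ↔ p ≤ q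
  count_getD : ∀ k a, (S.getD k []).count a = levelCount u (numContaining seqs) k a
  rowsSorted : RowsSorted S
  length_add_le : S.length + p ≤ u.length

variable {u}

theorem InsertionInvariant.step {p : ℕ} {seqs S : List (List ℕ)} (hp : p < u.length)
    (h : InsertionInvariant u (p + 1) seqs S) :
    InsertionInvariant u p (seqs ++ [p :: extendSeqP u seqs (u.length + 1) 2 p])
      (rowInsert S (u.getD p 0)) := by
  set ext := extendSeqP u seqs (u.length + 1) 2 p
  have hp0 : numContaining seqs p = 0 := by
    by_contra hne
    have := (h.pos_iff p hp).1 (Nat.pos_of_ne_zero hne)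
    omega
  obtain ⟨hpath, hmap, hlt⟩ : (p :: ext).map (u.getD · 0) = bumpPath S (u.getD p 0) ∧
      ext.map (numContaining seqs) = List.range' 1 ext.length ∧ ∀ q ∈ ext, q < u.length :=
    extendSeqP_follows_bumpPath (t := 0) h.rowsSorted (by simpa using h.count_getD)
      (by have := h.length_add_le; omega) p
  have hseq : (p :: ext).map (numContaining seqs) = List.range' 0 (p :: ext).length := by
    simp [hp0, hmap, List.range'_succ]
  have hext : ∀ q ∈ ext, p < q := fun q hq => by
    have : numContaining seqs q ∈ List.range' 1 ext.length := hmap ▸ List.mem_map_of_mem hq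
    have := (h.pos_iff q (hlt q hq)).1 (by simp [List.mem_range'_1] at this; omega)
    omega
  refine ⟨pos_numContaining_append_iff h.pos_iff hext, fun k a => ?_,
    h.rowsSorted.rowInsert _, ?_⟩
  · have h₁ := count_rowInsert_getD S (u.getD p 0) k a
    have h₂ := levelCount_add_ite (u := u) hseq (by simpa [hp] using hlt) k a
    rw [h.count_getD, ← hpath] at h₁
    rw [funext (numContaining_append_singleton seqs (p :: ext))]
    omega
  · have := length_rowInsert_le S (u.getD p 0)
    have := h.length_add_le
    omega

theorem insertionInvariant_length : InsertionInvariant u u.length [] [] where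
  pos_iff q hq := by simp [numContaining, hq]
  count_getD k a := by simp [levelCount, numContaining]
  rowsSorted := by simp [RowsSorted]
  length_add_le := by simp

theorem InsertionInvariant.seqsAuxP {p : ℕ} {seqs S : List (List ℕ)}
    (h : InsertionInvariant u p seqs S) (hp : p ≤ u.length) :
    InsertionInvariant u 0 (OrthoBij.seqsAuxP u (List.range p).reverse seqs)
      ((((List.range p).reverse).map (u.getD · 0)).foldl rowInsert S) := by
  induction p generalizing seqs S with
  | zero => simpa [OrthoBij.seqsAuxP] using h
  | succ p ih =>
    simp only [List.range_succ, List.reverse_append, List.reverse_singleton,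
      List.singleton_append, List.map_cons, List.foldl_cons, OrthoBij.seqsAuxP]
    exact ih (h.step (by omega)) (by omega)

variable (u) in
theorem insertionInvariant_seqsP :
    InsertionInvariant u 0 (seqsP u) (insertionTableau u.reverse) := by
  have hu : ((List.range u.length).reverse).map (u.getD · 0) = u.reverse := by
    rw [List.map_reverse]
    congr 1
    exact List.ext_getElem (by simp) fun i _ hi => by simp [hi]
  have h := (insertionInvariant_length (u := u)).seqsAuxP le_rfl
  rw [hu] at h
  exact h

theorem InsertionInvariant.isSuperstandard_iff {seqs S : List (List ℕ)}
    (h : InsertionInvariant u 0 seqs S) :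
    IsSuperstandard S ↔ ∀ p < u.length, numContaining seqs p = u.getD p 0 := by
  constructor
  · intro hS p hp
    have hpos := (h.pos_iff p hp).2 (Nat.zero_le p)
    have hmem : u.getD p 0 ∈ S.getD (numContaining seqs p - 1) [] :=
      (mem_iff_of_count_eq_levelCount (h.count_getD _) _).2 ⟨p, hp, by omega, rfl⟩
    have := hS _ _ hmem
    omega
  · intro hcount k a ha
    obtain ⟨q, hq, hqk, rfl⟩ := (mem_iff_of_count_eq_levelCount (h.count_getD k) a).1 ha
    rw [← hcount q hq, hqk]

end Word

end OrthoBij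

open OrthoBij in
/-- A word `u` over the positive integers is Yamanouchi if and only if
every position `p` of `u` carrying the letter `j` belongs to exactly `j` of the
sequences `v_1, …, v_m`. -/
theorem statement15 (u : List ℕ) (hu : ∀ x ∈ u, 0 < x) :
    IsYamanouchi u ↔
      ∀ p, p < u.length →
        (seqsP u).countP (fun sq => decide (p ∈ sq)) = u.getD p 0 := by
  rw [isYamanouchi_iff_isReverseLattice_reverse,
    isReverseLattice_iff_isSuperstandard_insertionTableau fun x hx => hu x (List.mem_reverse.1 hx)]
  exact (insertionInvariant_seqsP u).isSuperstandard_iff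
end
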